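/- arXiv:math/0604421 — 9 statements merged into one kernel-verified Lean document; each statement's English description precedes it below -/
import Mathlib

section
/- Let d ≥ 3 be an integer and let Γ be a symmetric numerical semigroup with exactly (d − 1)(d − 2)/2 gaps. For 0 ≤ l ≤ d − 3 set c_l := #{k ∈ Γ : k ≤ ld}. Then c_0 = 1, c_{d−3} = (d − 1)(d − 2)/2, and for every 0 ≤ l ≤ d − 3 one has c_l − (l + 1)(l + 2)/2 = c_{d−3−l} − (d − 1 − l)(d − 2 − l)/2; that is, the numbers n_l := c_l − (l+1)(l+2)/2 satisfy n_l = n_{d−3−l} and n_0 = n_{d−3} = 0. -/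
/-!
Write `S(n)` for the number of elements of `Γ` below `n`. Symmetry says that the reflection
`k ↦ 2δ - 1 - k` exchanges elements and gaps in `[0, 2δ)`; hence exactly half of `[0, 2δ)`,
i.e. `δ` numbers, lie in `Γ`, and cutting `[0, 2δ)` as `[0, a) ∪ [a, a + b)` gives
`S(2δ) + S(b) = S(a) + b`. Since `(l d + 1) + ((d - 3 - l) d + 1) = (d - 1)(d - 2) = 2δ`, this
relates `c_l` and `c_{d-3-l}`, and the identity for `n_l` is arithmetic.
-/

namespace Nat

variable {p q : ℕ → Prop} [DecidablePred p] [DecidablePred q]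

theorem count_congr_of_lt {n : ℕ} (h : ∀ k < n, p k ↔ q k) : count p n = count q n := by
  simp only [count_eq_card_filter_range]
  exact congrArg Finset.card (Finset.filter_congr fun k hk => h k (Finset.mem_range.1 hk))

theorem count_add_count_not (n : ℕ) : count p n + count (fun k => ¬p k) n = n := by
  simpa only [count_eq_card_filter_range, Finset.card_range] using
    Finset.card_filter_add_card_filter_not (s := Finset.range n) p

theorem count_reflect (n : ℕ) : count (fun k => p (n - 1 - k)) n = count p n := by
  simp only [count_eq_card_filter_range, Finset.card_filter]
  exact Finset.sum_range_reflect (fun k => if p k then 1 else 0) n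

theorem count_add_count_of_reflect_iff_not {n a b : ℕ} (hab : a + b = n)
    (hp : ∀ k < n, p k ↔ ¬p (n - 1 - k)) :
    count p n + count p b = count p a + b := by
  subst hab
  have hshift : count (fun k => p (a + k)) b = count (fun k => ¬p (b - 1 - k)) b :=
    count_congr_of_lt fun k hk => by
      rw [hp (a + k) (by omega), show a + b - 1 - (a + k) = b - 1 - k by omega]
  have hcompl := count_add_count_not (p := fun k => p (b - 1 - k)) b
  rw [count_reflect] at hcompl
  rw [count_add, hshift]
  omega

theorem count_two_mul_of_reflect_iff_not {δ : ℕ}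
    (hp : ∀ k < 2 * δ, p k ↔ ¬p (2 * δ - 1 - k)) : count p (2 * δ) = δ := by
  have := count_add_count_of_reflect_iff_not (two_mul δ).symm hp
  omega

end Nat

theorem Set.ncard_mem_le_eq_count (s : Set ℕ) [DecidablePred (· ∈ s)] (n : ℕ) :
    {k | k ∈ s ∧ k ≤ n}.ncard = Nat.count (· ∈ s) (n + 1) := by
  rw [Nat.count_eq_card_filter_range, ← Set.ncard_coe_finset]
  congr 1
  ext k
  simp [and_comm]

theorem Int.two_mul_triangle_div_two (n : ℕ) :
    2 * (((n : ℤ) + 1) * ((n : ℤ) + 2) / 2) = ((n : ℤ) + 1) * ((n : ℤ) + 2) :=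
  Int.mul_ediv_cancel' (Int.even_mul_succ_self ((n : ℤ) + 1)).two_dvd

theorem semigroup_count_symmetry_general (d : ℕ) (hd : 3 ≤ d)
    (Γ : Set ℕ) (h0 : 0 ∈ Γ) (δ : ℕ) (hδ2 : 2 * δ = (d - 1) * (d - 2))
    (hsym : ∀ k : ℕ, k < 2 * δ → (k ∈ Γ ↔ (2 * δ - 1 - k) ∉ Γ))
    (c : ℕ → ℕ) (hc : ∀ l : ℕ, c l = {k : ℕ | k ∈ Γ ∧ k ≤ l * d}.ncard) :
    c 0 = 1 ∧ c (d - 3) = (d - 1) * (d - 2) / 2 ∧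
    ∀ l : ℕ, l ≤ d - 3 →
      (c l : ℤ) - ((l : ℤ) + 1) * ((l : ℤ) + 2) / 2
        = (c (d - 3 - l) : ℤ)
          - ((d : ℤ) - 1 - (l : ℤ)) * ((d : ℤ) - 2 - (l : ℤ)) / 2 := by
  classical
  obtain ⟨e, rfl⟩ : ∃ e, d = e + 3 := ⟨d - 3, by omega⟩
  have hδ : 2 * δ = e * (e + 3) + 2 := by
    rw [hδ2, show e + 3 - 1 = e + 2 by omega, show e + 3 - 2 = e + 1 by omega]; ring
  have hc' (l : ℕ) : c l = Nat.count (· ∈ Γ) (l * (e + 3) + 1) :=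
    (hc l).trans (Γ.ncard_mem_le_eq_count _)
  have hreflect (l m : ℕ) (hlm : l + m = e) : c l + m * (e + 3) + 1 = δ + c m := by
    have hsplit : l * (e + 3) + 1 + (m * (e + 3) + 1) = 2 * δ := by rw [hδ, ← hlm]; ring
    have := Nat.count_add_count_of_reflect_iff_not hsplit hsym
    rw [Nat.count_two_mul_of_reflect_iff_not hsym, ← hc', ← hc'] at this
    omega
  have hc0 : c 0 = 1 := by rw [hc', zero_mul, Nat.count_one, if_pos h0]
  have hce : c e = δ := by have := hreflect 0 e (zero_add e); omega
  refine ⟨hc0, by rw [← hδ2, Nat.add_sub_cancel, hce]; omega, fun l hl => ?_⟩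
  obtain ⟨m, rfl⟩ : ∃ m, e = l + m := ⟨e - l, by omega⟩
  have hlm := hreflect l m rfl
  rw [show l + m + 3 - 3 - l = m by omega,
    show (((l + m + 3 : ℕ) : ℤ) - 1 - l) * (((l + m + 3 : ℕ) : ℤ) - 2 - l)
      = ((m : ℤ) + 1) * ((m : ℤ) + 2) by push_cast; ring]
  refine mul_left_cancel₀ (two_ne_zero' ℤ) ?_
  have hlmZ : (c l : ℤ) + m * (l + m + 3) + 1 = δ + c m := by exact_mod_cast hlm
  have hδZ : 2 * (δ : ℤ) = (l + m) * (l + m + 3) + 2 := by exact_mod_cast hδ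
  linear_combination 2 * hlmZ + hδZ - Int.two_mul_triangle_div_two l
    + Int.two_mul_triangle_div_two m

/-- For a symmetric numerical semigroup `Γ` with exactly `(d−1)(d−2)/2` gaps,
the counting numbers `c_l = #{k ∈ Γ : k ≤ ld}` satisfy `c_0 = 1`,
`c_{d−3} = (d−1)(d−2)/2` and the symmetry
`c_l − (l+1)(l+2)/2 = c_{d−3−l} − (d−1−l)(d−2−l)/2` for `0 ≤ l ≤ d−3`. -/
theorem semigroup_count_symmetry (d : ℕ) (hd : 3 ≤ d)
    (Γ : Set ℕ) (h0 : 0 ∈ Γ) (hadd : ∀ a ∈ Γ, ∀ b ∈ Γ, a + b ∈ Γ)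
    (hfin : Γᶜ.Finite) (δ : ℕ) (hδ2 : 2 * δ = (d - 1) * (d - 2))
    (hδ : Γᶜ.ncard = δ)
    (hsym : ∀ k : ℕ, k < 2 * δ → (k ∈ Γ ↔ (2 * δ - 1 - k) ∉ Γ))
    (c : ℕ → ℕ) (hc : ∀ l : ℕ, c l = {k : ℕ | k ∈ Γ ∧ k ≤ l * d}.ncard) :
    c 0 = 1 ∧ c (d - 3) = (d - 1) * (d - 2) / 2 ∧
    ∀ l : ℕ, l ≤ d - 3 →
      (c l : ℤ) - ((l : ℤ) + 1) * ((l : ℤ) + 2) / 2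
        = (c (d - 3 - l) : ℤ)
          - ((d : ℤ) - 1 - (l : ℤ)) * ((d : ℤ) - 2 - (l : ℤ)) / 2 :=
  semigroup_count_symmetry_general d hd Γ h0 δ hδ2 hsym c hc
end

section
/- Let d ≥ 3 be an integer and let Γ be a symmetric numerical semigroup with exactly (d − 1)(d − 2)/2 gaps. Then the following are equivalent: (i) for every 0 ≤ l ≤ d − 3, #{k ∈ Γ : k ≤ ld} = (l + 1)(l + 2)/2; (ii) Γ satisfies the semigroup distribution property for d, i.e. for every integer l ≥ 1 the half-open interval ((l − 1)d, ld] contains exactly min(l + 1, d) elements of Γ. -/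
/-- `Γ` satisfies the semigroup distribution property for `d`: for every
`l ≥ 1` the half-open interval `((l−1)d, ld]` contains exactly
`min (l+1) d` elements of `Γ`. -/
def SemigroupDistributionProperty (Γ : Set ℕ) (d : ℕ) : Prop :=
  ∀ l : ℕ, 1 ≤ l →
    {k : ℕ | k ∈ Γ ∧ (l - 1) * d < k ∧ k ≤ l * d}.ncard = min (l + 1) d

private lemma tri_step (m : ℕ) : (m+2)*(m+3)/2 = (m+1)*(m+2)/2 + (m+2) := by
  obtain ⟨t, ht⟩ := Nat.even_mul_succ_self (m+1)
  have ht' : (m+1)*(m+2) = t + t := by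
    calc (m+1)*(m+2) = (m+1)*((m+1)+1) := by ring
    _ = t + t := ht
  have h2 : (m+2)*(m+3) = (m+1)*(m+2) + 2*(m+2) := by ring
  rw [h2, ht']
  omega

/-- Equivalence of Conjectures B1 and B2: for a symmetric numerical semigroup
with `(d−1)(d−2)/2` gaps, `#{k ∈ Γ : k ≤ ld} = (l+1)(l+2)/2` for all
`0 ≤ l ≤ d−3` iff `Γ` satisfies the semigroup distribution property for `d`. -/
theorem conjB1_iff_conjB2 (d : ℕ) (hd : 3 ≤ d)
    (Γ : Set ℕ) (h0 : 0 ∈ Γ) (hadd : ∀ a ∈ Γ, ∀ b ∈ Γ, a + b ∈ Γ)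
    (hfin : Γᶜ.Finite) (δ : ℕ) (hδ2 : 2 * δ = (d - 1) * (d - 2))
    (hδ : Γᶜ.ncard = δ)
    (hsym : ∀ k : ℕ, k < 2 * δ → (k ∈ Γ ↔ (2 * δ - 1 - k) ∉ Γ)) :
    (∀ l : ℕ, l ≤ d - 3 →
        {k : ℕ | k ∈ Γ ∧ k ≤ l * d}.ncard = (l + 1) * (l + 2) / 2)
      ↔ SemigroupDistributionProperty Γ d := by
  classical
  obtain ⟨f, rfl⟩ : ∃ f, d = f + 3 := ⟨d - 3, by omega⟩
  clear hd
  have e1 : f + 3 - 1 = f + 2 := by omega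
  have e2 : f + 3 - 2 = f + 1 := by omega
  rw [e1, e2] at hδ2
  -- hδ2 : 2 * δ = (f + 2) * (f + 1)
  have hδpos : 1 ≤ δ := by
    have h1 : 2 * 1 ≤ (f + 2) * (f + 1) := Nat.mul_le_mul (by omega) (by omega)
    omega
  set cnt : ℕ → ℕ := fun N => ((Finset.range N).filter (· ∈ Γ)).card with hcnt
  -- the count of Γ in [0, 2δ) is δ, via the symmetry bijection
  have hM : cnt (2*δ) = δ := by
    have hbij : ((Finset.range (2*δ)).filter (· ∈ Γ)).card
        = ((Finset.range (2*δ)).filter (fun k => k ∉ Γ)).card := by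
      apply Finset.card_bij (fun k _ => 2*δ - 1 - k)
      · intro a ha
        simp only [Finset.mem_filter, Finset.mem_range] at ha ⊢
        refine ⟨by omega, ?_⟩
        intro hmem
        have := (hsym a ha.1).mp ha.2
        -- this : 2*δ - 1 - a ∉ Γ
        have h1 := (hsym (2*δ - 1 - a) (by omega)).mp hmem
        exact this hmem
      · intro a ha b hb hab
        simp only [Finset.mem_filter, Finset.mem_range] at ha hb
        omega
      · intro b hb
        simp only [Finset.mem_filter, Finset.mem_range] at hb
        refine ⟨2*δ - 1 - b, ?_, by omega⟩
        simp only [Finset.mem_filter, Finset.mem_range]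
        refine ⟨by omega, ?_⟩
        apply (hsym (2*δ - 1 - b) (by omega)).mpr
        have : 2*δ - 1 - (2*δ - 1 - b) = b := by omega
        rw [this]
        exact hb.2
    have htot : ((Finset.range (2*δ)).filter (· ∈ Γ)).card
        + ((Finset.range (2*δ)).filter (fun k => ¬ (k ∈ Γ))).card = 2*δ := by
      rw [Finset.card_filter_add_card_filter_not]
      exact Finset.card_range _
    simp only [hcnt]
    omega
  -- every n ≥ 2δ lies in Γ
  have key : ∀ n : ℕ, 2*δ ≤ n → n ∈ Γ := by
    intro n hn
    by_contra hnot
    have hGcard : ((Finset.range (2*δ)).filter (fun k => k ∉ Γ)).card = δ := by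
      have hbij : ((Finset.range (2*δ)).filter (· ∈ Γ)).card
          = ((Finset.range (2*δ)).filter (fun k => k ∉ Γ)).card := by
        apply Finset.card_bij (fun k _ => 2*δ - 1 - k)
        · intro a ha
          simp only [Finset.mem_filter, Finset.mem_range] at ha ⊢
          exact ⟨by omega, (hsym a ha.1).mp ha.2⟩
        · intro a ha b hb hab
          simp only [Finset.mem_filter, Finset.mem_range] at ha hb
          omega
        · intro b hb
          simp only [Finset.mem_filter, Finset.mem_range] at hb
          refine ⟨2*δ - 1 - b, ?_, by omega⟩
          simp only [Finset.mem_filter, Finset.mem_range]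
          refine ⟨by omega, ?_⟩
          apply (hsym (2*δ - 1 - b) (by omega)).mpr
          have : 2*δ - 1 - (2*δ - 1 - b) = b := by omega
          rw [this]
          exact hb.2
      have htot : ((Finset.range (2*δ)).filter (· ∈ Γ)).card
          + ((Finset.range (2*δ)).filter (fun k => ¬ (k ∈ Γ))).card = 2*δ := by
        rw [Finset.card_filter_add_card_filter_not]
        exact Finset.card_range _
      omega
    have hTF : Γᶜ.ncard = hfin.toFinset.card := Set.ncard_eq_toFinset_card _ hfin
    have hsub : (Finset.range (2*δ)).filter (fun k => k ∉ Γ) ⊆ hfin.toFinset := by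
      intro g hg
      simp only [Finset.mem_filter, Finset.mem_range] at hg
      simp only [Set.Finite.mem_toFinset, Set.mem_compl_iff]
      exact hg.2
    have heq : (Finset.range (2*δ)).filter (fun k => k ∉ Γ) = hfin.toFinset := by
      apply Finset.eq_of_subset_of_card_le hsub
      rw [← hTF, hδ, hGcard]
    have hnmem : n ∈ hfin.toFinset := by
      simp only [Set.Finite.mem_toFinset, Set.mem_compl_iff]
      exact hnot
    rw [← heq] at hnmem
    simp only [Finset.mem_filter, Finset.mem_range] at hnmem
    omega
  -- counting past the conductor
  have htail : ∀ N : ℕ, 2*δ ≤ N → cnt N = δ + (N - 2*δ) := by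
    intro N hN
    have hun : (Finset.range N).filter (· ∈ Γ)
        = (Finset.range (2*δ)).filter (· ∈ Γ) ∪ Finset.Ico (2*δ) N := by
      ext k
      simp only [Finset.mem_filter, Finset.mem_range, Finset.mem_union, Finset.mem_Ico]
      constructor
      · rintro ⟨hk, hkΓ⟩
        by_cases hlt : k < 2*δ
        · exact Or.inl ⟨hlt, hkΓ⟩
        · exact Or.inr ⟨by omega, hk⟩
      · rintro (⟨hk, hkΓ⟩ | ⟨h1, h2⟩)
        · exact ⟨by omega, hkΓ⟩
        · exact ⟨h2, key k h1⟩
    have hdisj : Disjoint ((Finset.range (2*δ)).filter (· ∈ Γ)) (Finset.Ico (2*δ) N) := by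
      rw [Finset.disjoint_left]
      intro k hk hk'
      simp only [Finset.mem_filter, Finset.mem_range] at hk
      simp only [Finset.mem_Ico] at hk'
      omega
    simp only [hcnt]
    rw [hun, Finset.card_union_of_disjoint hdisj, Nat.card_Ico]
    simp only [hcnt] at hM
    rw [hM]
  -- splitting counts over an interval
  have hsplit : ∀ a b : ℕ, a ≤ b →
      cnt b = cnt a + ((Finset.Ico a b).filter (· ∈ Γ)).card := by
    intro a b hab
    have hun : Finset.range b = Finset.range a ∪ Finset.Ico a b := by
      rw [Finset.range_eq_Ico, ← Finset.Ico_union_Ico_eq_Ico (Nat.zero_le a) hab, ← Finset.range_eq_Ico]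
    have hdisj : Disjoint ((Finset.range a).filter (· ∈ Γ))
        ((Finset.Ico a b).filter (· ∈ Γ)) := by
      rw [Finset.disjoint_left]
      intro k hk hk'
      simp only [Finset.mem_filter, Finset.mem_range] at hk
      simp only [Finset.mem_filter, Finset.mem_Ico] at hk'
      omega
    simp only [hcnt]
    rw [hun, Finset.filter_union, Finset.card_union_of_disjoint hdisj]
  -- translating the sets in the statement to finset counts
  have hS : ∀ l : ℕ, {k : ℕ | k ∈ Γ ∧ k ≤ l * (f+3)}.ncard = cnt (l*(f+3)+1) := by
    intro l
    have hs : {k : ℕ | k ∈ Γ ∧ k ≤ l * (f+3)}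
        = ↑((Finset.range (l*(f+3)+1)).filter (· ∈ Γ)) := by
      ext k
      simp only [Set.mem_setOf_eq, Finset.coe_filter, Finset.mem_range, Nat.lt_succ_iff]
      tauto
    rw [hs, Set.ncard_coe_finset]
  have hT : ∀ m : ℕ,
      {k : ℕ | k ∈ Γ ∧ (m + 1 - 1) * (f+3) < k ∧ k ≤ (m + 1) * (f+3)}.ncard
        = ((Finset.Ico (m*(f+3)+1) ((m+1)*(f+3)+1)).filter (· ∈ Γ)).card := by
    intro m
    have hs : {k : ℕ | k ∈ Γ ∧ (m + 1 - 1) * (f+3) < k ∧ k ≤ (m + 1) * (f+3)}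
        = ↑((Finset.Ico (m*(f+3)+1) ((m+1)*(f+3)+1)).filter (· ∈ Γ)) := by
      ext k
      simp only [Set.mem_setOf_eq, Finset.coe_filter, Finset.mem_Ico, Nat.add_sub_cancel]
      constructor
      · rintro ⟨h1, h2, h3⟩
        exact ⟨⟨by omega, by omega⟩, h1⟩
      · rintro ⟨⟨h2, h3⟩, h1⟩
        exact ⟨h1, by omega, by omega⟩
    rw [hs, Set.ncard_coe_finset]
  constructor
  · -- B1 → B2
    intro B1
    intro l hl
    obtain ⟨m, rfl⟩ : ∃ m, l = m + 1 := ⟨l - 1, by omega⟩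
    rw [hT m]
    have hle : m*(f+3)+1 ≤ (m+1)*(f+3)+1 := by
      have := Nat.mul_le_mul_right (f+3) (show m ≤ m+1 by omega)
      omega
    have hsp := hsplit (m*(f+3)+1) ((m+1)*(f+3)+1) hle
    by_cases hc1 : m + 1 ≤ f
    · -- generic case
      have hA := B1 (m+1) (by omega)
      rw [hS] at hA
      have hB := B1 m (by omega)
      rw [hS] at hB
      have hA' : cnt ((m+1)*(f+3)+1) = (m+2)*(m+3)/2 := by
        rw [hA]
      have hstep := tri_step m
      have hmin : min (m+1+1) (f+3) = m + 2 := by omega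
      rw [hmin]
      omega
    by_cases hc2 : m = f
    · -- boundary case l = d - 2
      subst f
      have hB := B1 m (by omega)
      rw [hS] at hB
      have hBval : cnt (m*(m+3)+1) = δ := by
        rw [hB, show (m+1)*(m+2) = (m+2)*(m+1) from by ring, ← hδ2]
        omega
      have h6 : (m+1)*(m+3) = (m+2)*(m+1) + (m+1) := by ring
      have hA := htail ((m+1)*(m+3)+1) (by omega)
      have hmin : min (m+1+1) (m+3) = m + 2 := by omega
      rw [hmin]
      omega
    · -- stable case l ≥ d - 1
      have hm : f + 1 ≤ m := by omega
      have hq : (m+1)*(f+3) = m*(f+3) + (f+3) := by ring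
      have hgeP : 2*δ ≤ m*(f+3) + 1 := by
        have h1 : (f+1)*(f+3) ≤ m*(f+3) := Nat.mul_le_mul_right (f+3) hm
        have h2 : (f+1)*(f+3) = (f+2)*(f+1) + (f+1) := by ring
        omega
      have hA := htail ((m+1)*(f+3)+1) (by omega)
      have hB := htail (m*(f+3)+1) hgeP
      have hmin : min (m+1+1) (f+3) = f + 3 := by omega
      rw [hmin]
      omega
  · -- B2 → B1
    intro SDP
    intro l hl
    rw [hS l]
    induction l with
    | zero =>
      have h1 : (0 : ℕ) * (f+3) + 1 = 1 := by omega
      rw [h1]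
      simp only [hcnt]
      rw [Finset.range_one, Finset.filter_singleton]
      simp [h0]
    | succ m ih =>
      have ihm := ih (by omega)
      have hle : m*(f+3)+1 ≤ (m+1)*(f+3)+1 := by
        have := Nat.mul_le_mul_right (f+3) (show m ≤ m+1 by omega)
        omega
      have hsp := hsplit (m*(f+3)+1) ((m+1)*(f+3)+1) hle
      have hmin := SDP (m+1) (by omega)
      rw [hT m] at hmin
      have hminval : min (m+1+1) (f+3) = m + 2 := by omega
      rw [hminval] at hmin
      have hstep := tri_step m
      have hgoal : (m+1+1)*(m+1+2) = (m+2)*(m+3) := by ring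
      rw [show (m+1+1)*(m+1+2)/2 = (m+2)*(m+3)/2 by rw [hgoal]]
      omega
end

section
/- For every integer d ≥ 3, the numerical semigroup Γ generated by d − 1 and d satisfies the semigroup distribution property for d: for every integer l ≥ 1 the half-open interval ((l − 1)d, ld] contains exactly min(l + 1, d) elements of Γ. -/
def consecutiveSemigroup (d : ℕ) : Set ℕ :=
  {n : ℕ | ∃ x y : ℕ, n = x * (d - 1) + y * d}

theorem mem_consecutiveSemigroup_iff {d l n j : ℕ} (hj : j < d) (hn : n + j = l * d) :
    n ∈ consecutiveSemigroup d ↔ j ≤ l := by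
  obtain ⟨e, rfl⟩ : ∃ e, d = e + 1 := ⟨d - 1, by omega⟩
  simp only [consecutiveSemigroup, Nat.add_sub_cancel, Set.mem_ofPred_eq]
  constructor
  · rintro ⟨x, y, rfl⟩
    have hjx : j ≤ x := by
      have hcongr : x + l * (e + 1) = j + (x + y) * (e + 1) := by rw [← hn]; ring
      have hmod := congrArg (· % (e + 1)) hcongr
      simp only [Nat.add_mul_mod_self_right, Nat.mod_eq_of_lt hj] at hmod
      exact hmod ▸ Nat.mod_le x (e + 1)
    have hmul : j * (e + 1) ≤ l * (e + 1) := by nlinarith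
    exact Nat.le_of_mul_le_mul_right hmul e.succ_pos
  · intro hjl
    obtain ⟨i, rfl⟩ := Nat.exists_eq_add_of_le hjl
    exact ⟨j, i, by linarith⟩

theorem setOf_mem_consecutiveSemigroup_window_eq_image {d l : ℕ} (hl : 1 ≤ l) :
    {k | k ∈ consecutiveSemigroup d ∧ (l - 1) * d < k ∧ k ≤ l * d} =
      (l * d - ·) '' Set.Iio (min (l + 1) d) := by
  have hdl : d ≤ l * d := Nat.le_mul_of_pos_left d hl
  have hwindow : (l - 1) * d = l * d - d := Nat.sub_one_mul l d
  ext k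
  constructor
  · rintro ⟨hk, hlo, hhi⟩
    have hj : l * d - k < d := by omega
    have hjl := (mem_consecutiveSemigroup_iff (l := l) hj (by omega)).1 hk
    exact ⟨l * d - k, lt_min (by omega) hj, Nat.sub_sub_self hhi⟩
  · rintro ⟨j, hj, rfl⟩
    dsimp only
    obtain ⟨hjl, hjd⟩ := lt_min_iff.1 (Set.mem_Iio.1 hj)
    exact ⟨(mem_consecutiveSemigroup_iff (l := l) hjd (by omega)).2 (by omega), by omega, by omega⟩

theorem distribution_property_case_a_general (d : ℕ) :
    SemigroupDistributionProperty
      {n : ℕ | ∃ x y : ℕ, n = x * (d - 1) + y * d} d := by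
  intro l hl
  rw [← consecutiveSemigroup, setOf_mem_consecutiveSemigroup_window_eq_image hl,
    Set.InjOn.ncard_image, Set.ncard_Iio_nat]
  intro a ha b hb hab
  have hdl : d ≤ l * d := Nat.le_mul_of_pos_left d hl
  simp only [Set.mem_Iio, lt_min_iff] at ha hb
  simp only at hab
  omega

/-- Case (a) of the classification: the semigroup `⟨d−1, d⟩` of the cusp of a
rational unicuspidal plane curve of degree `d` with one Puiseux pair
`(d−1, d)` satisfies the semigroup distribution property for `d`. -/
theorem distribution_property_case_a (d : ℕ) (hd : 3 ≤ d) :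
    SemigroupDistributionProperty
      {n : ℕ | ∃ x y : ℕ, n = x * (d - 1) + y * d} d :=
  distribution_property_case_a_general d
end

section
/- For every integer n ≥ 2, setting d := 2n, the numerical semigroup Γ generated by n and 4n − 1 satisfies the semigroup distribution property for d: for every integer l ≥ 1 the half-open interval ((l − 1)d, ld] contains exactly min(l + 1, d) elements of Γ. -/
open Finset

def twoGenSemigroup (n c : ℕ) : Set ℕ :=
  {m | ∃ x y : ℕ, m = x * n + y * (c * n - 1)}

section

variable {n c : ℕ}

theorem mul_lt_iff_lt_of_add_eq_mul {m r a b : ℕ} (hr : r < n) (h : m + r = a * n) :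
    b * n < m ↔ b < a := by
  constructor
  · intro hb
    by_contra! hab
    nlinarith [Nat.mul_le_mul_right n hab]
  · intro hab
    nlinarith [Nat.mul_le_mul_right n (Nat.succ_le_of_lt hab)]

theorem le_mul_iff_le_of_add_eq_mul {m r a b : ℕ} (hr : r < n) (h : m + r = a * n) :
    m ≤ b * n ↔ a ≤ b := by
  rw [← not_lt, mul_lt_iff_lt_of_add_eq_mul hr h, not_lt]

theorem mem_twoGenSemigroup_iff (hn : 0 < n) (hc : 0 < c) {m : ℕ} :
    m ∈ twoGenSemigroup n c ↔ ∃ a r, r < n ∧ c * r ≤ a ∧ m + r = a * n := by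
  obtain ⟨b, hb⟩ : ∃ b, c * n = b + 1 := ⟨c * n - 1, by have := Nat.mul_pos hc hn; omega⟩
  simp only [twoGenSemigroup, Set.mem_ofPred_eq, hb, Nat.add_sub_cancel]
  constructor
  · rintro ⟨x, y, rfl⟩
    refine ⟨x + y / n * b + c * (y % n), y % n, Nat.mod_lt _ hn, by omega, ?_⟩
    have hy : y = n * (y / n) + y % n := (Nat.div_add_mod y n).symm
    generalize y / n = q, y % n = r at hy ⊢
    subst hy
    linear_combination r * hb.symm
  · rintro ⟨a, r, -, hra, hm⟩
    refine ⟨a - c * r, r, ?_⟩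
    obtain ⟨s, rfl⟩ := Nat.exists_eq_add_of_le hra
    rw [Nat.add_sub_cancel_left]
    linear_combination hm + r * hb

theorem eq_and_eq_of_add_eq_mul {m r r' a a' : ℕ} (hr : r < n) (hr' : r' < n)
    (h : m + r = a * n) (h' : m + r' = a' * n) : a = a' ∧ r = r' := by
  have ha : a = a' := le_antisymm
    ((le_mul_iff_le_of_add_eq_mul hr h).1 (by omega))
    ((le_mul_iff_le_of_add_eq_mul hr' h').1 (by omega))
  subst ha
  exact ⟨rfl, by omega⟩

theorem filter_range_mul_le_eq_range (hc : 0 < c) (a : ℕ) :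
    (range n).filter (fun r => c * r ≤ a) = range (min n (a / c + 1)) := by
  ext r
  simp only [mem_filter, mem_range, Nat.lt_succ_iff, lt_min_iff, Nat.le_div_iff_mul_le hc]
  rw [mul_comm]

theorem ncard_twoGenSemigroup_inter_Ioc (hn : 0 < n) (hc : 0 < c) (j k : ℕ) :
    {m | m ∈ twoGenSemigroup n c ∧ j * n < m ∧ m ≤ k * n}.ncard =
      ∑ a ∈ Ioc j k, min n (a / c + 1) := by
  set T := (Ioc j k ×ˢ range n).filter (fun p => c * p.2 ≤ p.1)
  have mem_T {a r : ℕ} : (a, r) ∈ T ↔ (j < a ∧ a ≤ k) ∧ r < n ∧ c * r ≤ a := by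
    simp only [T, mem_filter, mem_product, mem_Ioc, mem_range, and_assoc]
  have sub_add_cancel_of_mem_T {a r : ℕ} (hp : (a, r) ∈ T) : a * n - r + r = a * n :=
    Nat.sub_add_cancel <| (mem_T.1 hp).2.1.le.trans <|
      Nat.le_mul_of_pos_left n (Nat.zero_lt_of_lt (mem_T.1 hp).1.1)
  have hset : {m | m ∈ twoGenSemigroup n c ∧ j * n < m ∧ m ≤ k * n} =
      (T.image fun p => p.1 * n - p.2 : Set ℕ) := by
    ext m
    simp only [Set.mem_ofPred_eq, coe_image, Set.mem_image, mem_coe, Prod.exists]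
    constructor
    · rintro ⟨hm, hjm, hmk⟩
      obtain ⟨a, r, hr, hra, hmr⟩ := (mem_twoGenSemigroup_iff hn hc).1 hm
      refine ⟨a, r, mem_T.2 ⟨⟨?_, ?_⟩, hr, hra⟩, by omega⟩
      · exact (mul_lt_iff_lt_of_add_eq_mul hr hmr).1 hjm
      · exact (le_mul_iff_le_of_add_eq_mul hr hmr).1 hmk
    · rintro ⟨a, r, hp, rfl⟩
      have hmr := sub_add_cancel_of_mem_T hp
      obtain ⟨⟨hja, hak⟩, hr, hra⟩ := mem_T.1 hp
      exact ⟨(mem_twoGenSemigroup_iff hn hc).2 ⟨a, r, hr, hra, hmr⟩,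
        (mul_lt_iff_lt_of_add_eq_mul hr hmr).2 hja, (le_mul_iff_le_of_add_eq_mul hr hmr).2 hak⟩
  have hinj : Set.InjOn (fun p : ℕ × ℕ => p.1 * n - p.2) T := by
    rintro ⟨a, r⟩ hp ⟨a', r'⟩ hq (hpq : a * n - r = a' * n - r')
    have hq' := sub_add_cancel_of_mem_T hq
    rw [← hpq] at hq'
    obtain ⟨rfl, rfl⟩ := eq_and_eq_of_add_eq_mul (mem_T.1 hp).2.1 (mem_T.1 hq).2.1
      (sub_add_cancel_of_mem_T hp) hq'
    rfl
  rw [hset, Set.ncard_coe_finset, card_image_of_injOn hinj, card_filter, sum_product]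
  simp only [← card_filter, filter_range_mul_le_eq_range hc, card_range]

end

/-- Case (b) of the classification: for `d = 2n` even, the semigroup
`⟨d/2, 2d−1⟩ = ⟨n, 4n−1⟩` satisfies the semigroup distribution property
for `d`. -/
theorem distribution_property_case_b (n : ℕ) (hn : 2 ≤ n) :
    SemigroupDistributionProperty
      {m : ℕ | ∃ x y : ℕ, m = x * n + y * (4 * n - 1)} (2 * n) := by
  change SemigroupDistributionProperty (twoGenSemigroup n 4) (2 * n)
  intro l hl
  obtain ⟨l, rfl⟩ := Nat.exists_eq_add_of_le' hl
  have hlow : (l + 1 - 1) * (2 * n) = 2 * l * n := by rw [Nat.add_sub_cancel]; ring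
  have hhigh : (l + 1) * (2 * n) = (2 * l + 2) * n := by ring
  have hIoc : Ioc (2 * l) (2 * l + 2) = {2 * l + 1, 2 * l + 2} := by
    ext a
    simp only [mem_Ioc, mem_insert, mem_singleton]
    omega
  rw [hlow, hhigh, ncard_twoGenSemigroup_inter_Ioc (by omega) (by norm_num), hIoc,
    sum_pair (by omega)]
  omega
end

section
/- Let (φ_j) denote the Fibonacci numbers (φ_0 = 0, φ_1 = 1, φ_{j+2} = φ_{j+1} + φ_j). For every odd integer j ≥ 5, setting d := φ_{j−2}·φ_j, the numerical semigroup Γ generated by φ_{j−2}² and φ_j² satisfies the semigroup distribution property for d: for every integer l ≥ 1 the half-open interval ((l − 1)d, ld] contains exactly min(l + 1, d) elements of Γ. -/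
open Finset
set_option maxHeartbeats 2000000

private def Tg (n : ℕ) : ℕ := (range (n+1)).sum id
private lemma Tg_succ (n : ℕ) : Tg (n+1) = Tg n + (n+1) := Finset.sum_range_succ id (n+1)
private lemma Tg_mono {m n : ℕ} (h : m ≤ n) : Tg m ≤ Tg n :=
  Finset.sum_le_sum_of_subset (Finset.range_subset_range.mpr (by omega))

private lemma frob_exists {a b n : ℕ} (ha : 1 ≤ a) (hcop : Nat.Coprime a b)
    (hn : a * b < n + a + b) : ∃ x y : ℕ, y < a ∧ a * x + b * y = n := by
  rcases eq_or_lt_of_le ha with h1 | h2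
  · exact ⟨n, 0, by omega, by rw [← h1]; omega⟩
  · haveI : NeZero a := ⟨by omega⟩
    have hba : Nat.Coprime b a := hcop.symm
    set z : ZMod a := (n : ZMod a) * (b : ZMod a)⁻¹ with hz
    set y0 : ℕ := z.val with hy0
    have hy0lt : y0 < a := ZMod.val_lt z
    have hcast : ((b * y0 : ℕ) : ZMod a) = (n : ZMod a) := by
      push_cast
      rw [ZMod.natCast_val, ZMod.cast_id]
      rw [hz, ← mul_assoc, mul_comm (b : ZMod a) _, mul_assoc,
        ZMod.coe_mul_inv_eq_one b hba, mul_one]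
    have hmod : b * y0 ≡ n [MOD a] := by
      rwa [ZMod.natCast_eq_natCast_iff] at hcast
    have hdvd : (a : ℤ) ∣ (n : ℤ) - ((b * y0 : ℕ) : ℤ) := by
      exact_mod_cast (Nat.modEq_iff_dvd).mp hmod
    obtain ⟨t, ht⟩ := hdvd
    have hbnd : ((b * y0 : ℕ) : ℤ) < (n : ℤ) + a := by
      have h3 : b * y0 ≤ b * (a - 1) := Nat.mul_le_mul_left b (by omega)
      have h4 : b * (a - 1) + b = a * b := by
        rw [mul_comm a b, ← Nat.mul_succ]; congr 1; omega
      have : b * y0 < n + a := by omega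
      exact_mod_cast this
    have ht0 : 0 ≤ t := by
      by_contra hneg
      push_neg at hneg
      have h5 : t ≤ -1 := by omega
      have h6 : (a : ℤ) * t ≤ (a : ℤ) * (-1) :=
        mul_le_mul_of_nonneg_left h5 (by positivity)
      omega
    refine ⟨t.toNat, y0, hy0lt, ?_⟩
    have h7 : (a : ℤ) * (t.toNat : ℤ) + (b * y0 : ℕ) = (n : ℤ) := by
      rw [Int.toNat_of_nonneg ht0]; omega
    exact_mod_cast h7

private lemma val_inj {u v x y x' y' : ℕ} (hu : 1 ≤ u) (hcop : Nat.Coprime u v)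
    (hy : y < u) (hy' : y' < u) (h : u * x + v * y = u * x' + v * y') :
    x = x' ∧ y = y' := by
  wlog hle : y' ≤ y generalizing x y x' y'
  · have := this hy' hy h.symm (by omega); omega
  obtain ⟨d, rfl⟩ : ∃ d, y = y' + d := ⟨y - y', by omega⟩
  have hma := mul_add v y' d
  have hxx' : u * x ≤ u * x' := by omega
  have hx : x ≤ x' := Nat.le_of_mul_le_mul_left hxx' (by omega)
  obtain ⟨e, rfl⟩ : ∃ e, x' = x + e := ⟨x' - x, by omega⟩
  have hmb := mul_add u x e
  have hvd : v * d = u * e := by omega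
  have hdvd : u ∣ d := (Nat.Coprime.dvd_of_dvd_mul_left hcop ⟨e, hvd⟩)
  have : d = 0 := by
    rcases Nat.eq_zero_or_pos d with h0 | hpos
    · exact h0
    · exfalso; have := Nat.le_of_dvd hpos hdvd; omega
  subst this
  constructor
  · have : u * e = 0 := by omega
    have : e = 0 := by
      rcases Nat.mul_eq_zero.mp this with h | h <;> omega
    omega
  · omega



/-- count of pairs `(x,y)` with `y < u` and `u*x + v*y ≤ N` (the canonical
representatives of elements of `⟨u,v⟩` up to `N` when `u,v` are coprime). -/
private def kc (u v N : ℕ) : ℕ :=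
  ((range (N+1) ×ˢ range u).filter (fun p => u * p.1 + v * p.2 ≤ N)).card

/-- count of pairs `(x,y)` with `x < v` and `u*x + v*y ≤ N`. -/
private def bc (u v N : ℕ) : ℕ :=
  ((range v ×ˢ range (N+1)).filter (fun p => u * p.1 + v * p.2 ≤ N)).card

/-- count of all pairs `(x,y)` with `u*x + v*y ≤ N`. -/
private def cnt (u v N : ℕ) : ℕ :=
  ((range (N+1) ×ˢ range (N+1)).filter (fun p => u * p.1 + v * p.2 ≤ N)).card

private lemma kc_eq_bc {u v : ℕ} (hu : 1 ≤ u) (hv : 1 ≤ v) (N : ℕ) :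
    kc u v N = bc u v N := by
  unfold kc bc
  apply Finset.card_bij' (fun p _ => (p.1 % v, p.2 + u * (p.1 / v)))
    (fun p _ => (p.1 + v * (p.2 / u), p.2 % u))
  · -- maps into
    intro p hp
    simp only [Finset.mem_filter, Finset.mem_product, Finset.mem_range] at hp ⊢
    obtain ⟨⟨hx, hy⟩, hval⟩ := hp
    have hval' : u * (p.1 % v) + v * (p.2 + u * (p.1 / v)) = u * p.1 + v * p.2 := by
      have := Nat.mod_add_div p.1 v
      nlinarith [Nat.mod_add_div p.1 v]
    refine ⟨⟨Nat.mod_lt _ (by omega), ?_⟩, by omega⟩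
    · have h1 : v * (p.2 + u * (p.1 / v)) ≤ N := by omega
      have : p.2 + u * (p.1 / v) ≤ v * (p.2 + u * (p.1 / v)) := Nat.le_mul_of_pos_left _ (by omega)
      omega
  · intro p hp
    simp only [Finset.mem_filter, Finset.mem_product, Finset.mem_range] at hp ⊢
    obtain ⟨⟨hx, hy⟩, hval⟩ := hp
    have hval' : u * (p.1 + v * (p.2 / u)) + v * (p.2 % u) = u * p.1 + v * p.2 := by
      nlinarith [Nat.mod_add_div p.2 u]
    refine ⟨⟨?_, Nat.mod_lt _ (by omega)⟩, by omega⟩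
    · have h1 : u * (p.1 + v * (p.2 / u)) ≤ N := by omega
      have : p.1 + v * (p.2 / u) ≤ u * (p.1 + v * (p.2 / u)) := Nat.le_mul_of_pos_left _ (by omega)
      omega
  · intro p hp
    simp only [Finset.mem_filter, Finset.mem_product, Finset.mem_range] at hp
    obtain ⟨⟨hx, hy⟩, hval⟩ := hp
    have h1 : (p.2 + u * (p.1 / v)) / u = p.1 / v := by
      rw [Nat.add_mul_div_left _ _ (by omega : 0 < u), Nat.div_eq_of_lt hy]; omega
    have h2 : (p.2 + u * (p.1 / v)) % u = p.2 := by
      rw [Nat.add_mul_mod_self_left, Nat.mod_eq_of_lt hy]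
    ext
    · simp only [h1]; exact Nat.mod_add_div p.1 v
    · simp only [h2]
  · intro p hp
    simp only [Finset.mem_filter, Finset.mem_product, Finset.mem_range] at hp
    obtain ⟨⟨hx, hy⟩, hval⟩ := hp
    have h1 : (p.1 + v * (p.2 / u)) % v = p.1 := by
      rw [Nat.add_mul_mod_self_left, Nat.mod_eq_of_lt hx]
    have h2 : (p.1 + v * (p.2 / u)) / v = p.2 / u := by
      rw [Nat.add_mul_div_left _ _ (by omega : 0 < v), Nat.div_eq_of_lt hx]; omega
    ext
    · simp only [h1]
    · simp only [h2]; exact Nat.mod_add_div p.2 u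

private lemma kc_stable {u v M N : ℕ} (hu : 1 ≤ u) (hM : M ≤ N) (a : ℕ) :
    ((range (N+1) ×ˢ range a).filter (fun p => u * p.1 + v * p.2 ≤ M)).card
      = ((range (M+1) ×ˢ range a).filter (fun p => u * p.1 + v * p.2 ≤ M)).card := by
  congr 1
  apply Finset.ext
  intro p
  simp only [Finset.mem_filter, Finset.mem_product, Finset.mem_range]
  constructor
  · rintro ⟨⟨hx, hy⟩, hval⟩
    refine ⟨⟨?_, hy⟩, hval⟩
    have : p.1 ≤ u * p.1 := Nat.le_mul_of_pos_left _ (by omega)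
    omega
  · rintro ⟨⟨hx, hy⟩, hval⟩
    exact ⟨⟨by omega, hy⟩, hval⟩

private lemma cnt_stable {u v M N : ℕ} (hu : 1 ≤ u) (hv : 1 ≤ v) (hM : M ≤ N) :
    ((range (N+1) ×ˢ range (N+1)).filter (fun p => u * p.1 + v * p.2 ≤ M)).card
      = cnt u v M := by
  unfold cnt
  congr 1
  apply Finset.ext
  intro p
  simp only [Finset.mem_filter, Finset.mem_product, Finset.mem_range]
  constructor
  · rintro ⟨⟨hx, hy⟩, hval⟩
    have h1 : p.1 ≤ u * p.1 := Nat.le_mul_of_pos_left _ (by omega)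
    have h2 : p.2 ≤ v * p.2 := Nat.le_mul_of_pos_left _ (by omega)
    exact ⟨⟨by omega, by omega⟩, hval⟩
  · rintro ⟨⟨hx, hy⟩, hval⟩
    exact ⟨⟨by omega, by omega⟩, hval⟩

private lemma cnt_eq_kc {u v N : ℕ} (hv : 1 ≤ v) (hN : N < u * v) :
    cnt u v N = kc u v N := by
  unfold cnt kc
  congr 1
  apply Finset.ext
  intro p
  simp only [Finset.mem_filter, Finset.mem_product, Finset.mem_range]
  constructor
  · rintro ⟨⟨hx, hy⟩, hval⟩
    refine ⟨⟨hx, ?_⟩, hval⟩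
    by_contra hge
    push_neg at hge
    have : u * v ≤ v * p.2 := by
      calc u * v = v * u := by ring
      _ ≤ v * p.2 := Nat.mul_le_mul_left v hge
    omega
  · rintro ⟨⟨hx, hy⟩, hval⟩
    refine ⟨⟨hx, ?_⟩, hval⟩
    have : p.2 ≤ v * p.2 := Nat.le_mul_of_pos_left _ (by omega)
    omega



private lemma cond_equiv {a b c a' m x y : ℕ} (ha : 1 ≤ a) (hac : a ≤ c)
    (h2 : a * b = c * c + 1) (h4 : a' * c = a * a + 1)
    (hm : m + 1 ≤ c) (hx : x < c) :
    a * x + b * y ≤ m * c ↔ a' * x + c * y ≤ a * m := by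
  have key : c * (a' * x + c * y) + y = a * (a * x + b * y) + x := by
    have e1 : c * (a' * x + c * y) + y = (a' * c) * x + (c * c + 1) * y := by ring
    have e2 : a * (a * x + b * y) + x = (a * a + 1) * x + (a * b) * y := by ring
    rw [e1, e2, h4, h2]
  have e3 : c * (a * m) = a * (m * c) := by ring
  constructor
  · intro hle
    have hmul : a * (a * x + b * y) ≤ a * (m * c) := Nat.mul_le_mul_left a hle
    have e4 : c * (a * m + 1) = c * (a * m) + c := by ring
    have h6 : c * (a' * x + c * y) < c * (a * m + 1) := by omega
    have := Nat.lt_of_mul_lt_mul_left h6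
    omega
  · intro hle
    have h5 : c * (a' * x + c * y) ≤ c * (a * m) := Nat.mul_le_mul_left c hle
    rcases le_or_gt y x with hyx | hxy
    · have h7 : a * (a * x + b * y) ≤ a * (m * c) := by omega
      exact Nat.le_of_mul_le_mul_left h7 (by omega)
    · have hya : y < a := by
        have h6 : c * y ≤ a * m := by omega
        have h7 : a * m ≤ a * (c - 1) := Nat.mul_le_mul_left a (by omega)
        have h8 : a * (c - 1) + a = a * c := by rw [← Nat.mul_succ]; congr 1; omega
        have e6 : a * c = c * a := by ring
        have h9 : c * y < c * a := by omega
        exact Nat.lt_of_mul_lt_mul_left h9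
      by_contra hgt
      push_neg at hgt
      have h6 : a * (m * c + 1) ≤ a * (a * x + b * y) := Nat.mul_le_mul_left a hgt
      have e5 : a * (m * c + 1) = a * (m * c) + a := by ring
      omega

private lemma cond_equiv_S {al be a0 l x y : ℕ} (h : a0 * be = al * al + 1)
    (hx : x < be) :
    (al * al) * x + (be * be) * y ≤ l * (al * be) ↔ a0 * x + be * y ≤ l * al := by
  have hbe : 1 ≤ be := by
    by_contra h0
    push_neg at h0
    interval_cases be <;> omega
  have key : be * (a0 * x + be * y) = (al * al) * x + (be * be) * y + x := by
    have e1 : be * (a0 * x + be * y) = (a0 * be) * x + (be * be) * y := by ring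
    rw [e1, h]; ring
  have e2 : be * (l * al) = l * (al * be) := by ring
  constructor
  · intro hle
    have e1 : be * (l * al + 1) = be * (l * al) + be := by ring
    have h5 : be * (a0 * x + be * y) < be * (l * al + 1) := by omega
    have := Nat.lt_of_mul_lt_mul_left h5
    omega
  · intro hle
    have h5 : be * (a0 * x + be * y) ≤ be * (l * al) := Nat.mul_le_mul_left be hle
    omega

private lemma cnt_split {U V W C u0 A m : ℕ} (hU : 1 ≤ U) (hV : 1 ≤ V)
    (hC : 1 ≤ C) (hu0 : 1 ≤ u0) (hA : 1 ≤ A) (hAW : A ≤ W)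
    (hUC : U * C = A * W)
    (hcond : ∀ x y : ℕ, x < C → (U * x + V * y ≤ m * W ↔ u0 * x + C * y ≤ A * m)) :
    cnt U V (m * W) = bc u0 C (A * m) + (if A ≤ m then cnt U V ((m - A) * W) else 0) := by
  classical
  have hsplit := Finset.card_filter_add_card_filter_not
    (s := (range (m*W+1) ×ˢ range (m*W+1)).filter (fun p => U * p.1 + V * p.2 ≤ m*W))
    (p := fun p => p.1 < C)
  -- Part A
  have hA1 : (((range (m*W+1) ×ˢ range (m*W+1)).filter
        (fun p => U * p.1 + V * p.2 ≤ m*W)).filter (fun p => p.1 < C))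
      = (range C ×ˢ range (A*m+1)).filter (fun p => u0 * p.1 + C * p.2 ≤ A * m) := by
    apply Finset.ext
    rintro ⟨x, y⟩
    simp only [Finset.mem_filter, Finset.mem_product, Finset.mem_range]
    constructor
    · rintro ⟨⟨⟨hx, hy⟩, hval⟩, hxC⟩
      have hcond' := (hcond x y hxC).mp hval
      have h1 : y ≤ C * y := Nat.le_mul_of_pos_left _ (by omega)
      exact ⟨⟨hxC, by omega⟩, hcond'⟩
    · rintro ⟨⟨hxC, hy⟩, hval⟩
      have hval' := (hcond x y hxC).mpr hval
      have h1 : x ≤ u0 * x := Nat.le_mul_of_pos_left _ (by omega)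
      have h2 : A * m ≤ W * m := Nat.mul_le_mul_right m hAW
      have e2 : W * m = m * W := by ring
      exact ⟨⟨⟨by omega, by omega⟩, hval'⟩, hxC⟩
  -- Part B
  have hB : ((((range (m*W+1) ×ˢ range (m*W+1)).filter
        (fun p => U * p.1 + V * p.2 ≤ m*W)).filter (fun p => ¬ p.1 < C))).card
      = (if A ≤ m then cnt U V ((m - A) * W) else 0) := by
    rcases le_or_gt A m with hAm | hAm
    · rw [if_pos hAm]
      have eW : m * W = (m-A) * W + A * W := by
        have h : (m - A) + A = m := by omega
        calc m * W = ((m-A)+A) * W := by rw [h]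
        _ = (m-A)*W + A*W := by rw [add_mul]
      unfold cnt
      apply Finset.card_nbij' (fun p => (p.1 - C, p.2)) (fun p => (p.1 + C, p.2))
      · rintro ⟨x, y⟩ hp
        simp only [Finset.mem_coe, Finset.mem_filter, Finset.mem_product, Finset.mem_range] at hp ⊢
        obtain ⟨⟨⟨hx, hy⟩, hval⟩, hxC⟩ := hp
        push_neg at hxC
        have e1 : U * x = U * (x - C) + U * C := by
          have h : x = (x - C) + C := by omega
          calc U * x = U * ((x-C)+C) := by rw [← h]
          _ = U * (x-C) + U * C := by rw [mul_add]
        have hval' : U * (x - C) + V * y ≤ (m-A) * W := by omega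
        have h1 : x - C ≤ U * (x - C) := Nat.le_mul_of_pos_left _ (by omega)
        have h2 : y ≤ V * y := Nat.le_mul_of_pos_left _ (by omega)
        exact ⟨⟨by omega, by omega⟩, hval'⟩
      · rintro ⟨x, y⟩ hp
        simp only [Finset.mem_coe, Finset.mem_filter, Finset.mem_product, Finset.mem_range] at hp ⊢
        obtain ⟨⟨hx, hy⟩, hval⟩ := hp
        have e1 : U * (x + C) = U * x + U * C := by rw [mul_add]
        have h1 : x + C ≤ U * (x + C) := Nat.le_mul_of_pos_left _ (by omega)
        have h2 : y ≤ V * y := Nat.le_mul_of_pos_left _ (by omega)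
        have hval' : U * (x + C) + V * y ≤ m * W := by omega
        refine ⟨⟨⟨by omega, by omega⟩, hval'⟩, by omega⟩
      · rintro ⟨x, y⟩ hp
        simp only [Finset.mem_coe, Finset.mem_filter, Finset.mem_product, Finset.mem_range] at hp
        obtain ⟨⟨⟨hx, hy⟩, hval⟩, hxC⟩ := hp
        push_neg at hxC
        have h : x - C + C = x := by omega
        simp only [Prod.mk.injEq]
        exact ⟨h, trivial⟩
      · rintro ⟨x, y⟩ hp
        have h : x + C - C = x := by omega
        simp only [Prod.mk.injEq]
        exact ⟨h, trivial⟩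
    · rw [if_neg (by omega)]
      rw [Finset.card_eq_zero, Finset.filter_eq_empty_iff]
      rintro ⟨x, y⟩ hp
      simp only [Finset.mem_filter, Finset.mem_product, Finset.mem_range] at hp
      obtain ⟨⟨hx, hy⟩, hval⟩ := hp
      simp only [not_not]
      by_contra hxC
      push_neg at hxC
      have h1 : U * C ≤ U * x := Nat.mul_le_mul_left U hxC
      have h2 : (m+1) * W ≤ A * W := Nat.mul_le_mul_right W (by omega)
      have e1 : (m+1) * W = m * W + W := by ring
      omega
  have hcnt : cnt U V (m * W) = (((range (m*W+1) ×ˢ range (m*W+1)).filter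
        (fun p => U * p.1 + V * p.2 ≤ m*W))).card := rfl
  have hbc : bc u0 C (A * m) = ((range C ×ˢ range (A*m+1)).filter
        (fun p => u0 * p.1 + C * p.2 ≤ A * m)).card := rfl
  rw [hcnt, ← hsplit, hA1, hB, hbc]

private lemma Tg_zero : Tg 0 = 0 := rfl

private lemma not_three_dvd_sq_add_one (c : ℕ) : ¬ (3 ∣ c * c + 1) := by
  intro hdvd
  have hmm : (c * c) % 3 = ((c % 3) * (c % 3)) % 3 := Nat.mul_mod c c 3
  have hr : c % 3 = 0 ∨ c % 3 = 1 ∨ c % 3 = 2 := by omega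
  rcases hr with h | h | h <;> rw [h] at hmm <;> omega

/-- The master lemma: a triple `(a,b,c)` with `a+b = 3c`, `ab = c²+1`, `a ≤ c`
(consecutive odd-indexed Fibonacci numbers and their like) satisfies the
distribution property with step `c`. -/
private lemma KL : ∀ a b c m : ℕ, 1 ≤ a → a ≤ c → a + b = 3 * c → a * b = c * c + 1 →
    kc a b (m * c) + Tg (m + 1 - c) = Tg (m + 1) := by
  intro a
  induction a using Nat.strong_induction_on with
  | _ a IH =>
  intro b c m ha hac h1 h2
  have hc : 1 ≤ c := le_trans ha hac
  have hb : 1 ≤ b := by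
    rcases Nat.eq_zero_or_pos b with h0 | h; · rw [h0, Nat.mul_zero] at h2; omega
    · exact h
  have hkey : a * a + (c * c + 1) = 3 * (a * c) := by
    have e1 : a * (a + b) = a * (3 * c) := by rw [h1]
    have e2 : a * (a + b) = a * a + a * b := by ring
    have e3 : a * (3 * c) = 3 * (a * c) := by ring
    omega
  -- coprimality
  have hcop_ac : Nat.Coprime a c := by
    have hg1 : Nat.gcd a c ∣ a := Nat.gcd_dvd_left a c
    have hg2 : Nat.gcd a c ∣ c := Nat.gcd_dvd_right a c
    have h3 : Nat.gcd a c ∣ c * c + 1 := h2 ▸ Dvd.dvd.mul_right hg1 b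
    have h4 : Nat.gcd a c ∣ c * c := Dvd.dvd.mul_right hg2 c
    have h5 : Nat.gcd a c ∣ 1 := (Nat.dvd_add_right h4).mp h3
    exact Nat.dvd_one.mp h5
  have hcop : Nat.Coprime a b := by
    have hg1 : Nat.gcd a b ∣ a := Nat.gcd_dvd_left a b
    have hg2 : Nat.gcd a b ∣ b := Nat.gcd_dvd_right a b
    have h3 : Nat.gcd a b ∣ 3 * c := h1 ▸ Nat.dvd_add hg1 hg2
    have hgc : Nat.Coprime (Nat.gcd a b) c := Nat.Coprime.coprime_dvd_left hg1 hcop_ac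
    have h4 : Nat.gcd a b ∣ 3 := (Nat.Coprime.dvd_of_dvd_mul_right hgc) h3
    have h5 : Nat.gcd a b ∣ c * c + 1 := h2 ▸ Dvd.dvd.mul_right hg1 b
    rcases (Nat.prime_three).eq_one_or_self_of_dvd _ h4 with h6 | h6
    · exact h6
    · exact absurd (h6 ▸ h5) (not_three_dvd_sq_add_one c)
  rcases eq_or_lt_of_le ha with ha1 | ha2
  · -- base case a = 1
    have ha1' : a = 1 := ha1.symm
    subst ha1'
    have hkc1 : ∀ N, kc 1 b N = N + 1 := by
      intro N
      unfold kc
      rw [Finset.filter_true_of_mem, Finset.card_product, Finset.card_range,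
        Finset.card_range, Nat.mul_one]
      rintro ⟨x, y⟩ hp
      simp only [Finset.mem_product, Finset.mem_range] at hp
      have hy0 : y = 0 := by omega
      simp only [hy0, Nat.mul_zero, Nat.add_zero, Nat.one_mul]
      omega
    have hcle : c ≤ 2 := by
      by_contra hgt
      push_neg at hgt
      have h7 : 3 * c ≤ c * c := Nat.mul_le_mul_right c (by omega)
      omega
    interval_cases c
    · rw [hkc1, Nat.mul_one]
      have e : m + 1 - 1 = m := by omega
      rw [e, Tg_succ]
      omega
    · rw [hkc1]
      rcases Nat.eq_zero_or_pos m with hm0 | hm1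
      · subst hm0
        have e : 0 + 1 - 2 = 0 := rfl
        rw [e, Tg_zero, Tg_succ, Tg_zero]
      · obtain ⟨k, rfl⟩ : ∃ k, m = k + 1 := ⟨m - 1, by omega⟩
        have e : k + 1 + 1 - 2 = k := by omega
        rw [e, Tg_succ, Tg_succ]
        omega
  · -- inductive case a ≥ 2
    have hc2a : 2 * a < c := by
      by_contra hle
      push_neg at hle
      have hZ : (a:ℤ) * a + ((c:ℤ) * c + 1) = 3 * ((a:ℤ) * c) := by exact_mod_cast hkey
      have h1Z : (a:ℤ) ≤ c := by exact_mod_cast hac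
      have h2Z : (c:ℤ) ≤ 2 * a := by exact_mod_cast hle
      have h3Z : (2:ℤ) ≤ a := by exact_mod_cast ha2
      nlinarith [mul_nonneg (sub_nonneg.mpr h1Z) (sub_nonneg.mpr h2Z)]
    have hc3a : c < 3 * a := by
      have h7 : c * c < (3 * a) * c := by
        have e : (3 * a) * c = 3 * (a * c) := by ring
        omega
      exact Nat.lt_of_mul_lt_mul_right h7
    set a' := 3 * a - c with ha'def
    have ha'c : a' + c = 3 * a := by omega
    have h4 : a' * c = a * a + 1 := by
      have e1 : (a' + c) * c = a' * c + c * c := by ring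
      have e2 : (a' + c) * c = (3 * a) * c := by rw [ha'c]
      have e3 : (3 * a) * c = 3 * (a * c) := by ring
      omega
    have ha'1 : 1 ≤ a' := by omega
    have ha'a : a' < a := by omega
    -- small regime: m ≤ c - 1, count all pairs
    have small : ∀ m, m + 1 ≤ c → cnt a b (m * c) = Tg (m + 1) := by
      intro m
      induction m using Nat.strong_induction_on with
      | _ m IHm =>
      intro hm
      have hcond : ∀ x y : ℕ, x < c → (a * x + b * y ≤ m * c ↔ a' * x + c * y ≤ a * m) :=
        fun x y hx => cond_equiv ha hac h2 h4 hm hx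
      have hsplit := cnt_split (U := a) (V := b) (W := c) (C := c) (u0 := a') (A := a)
        (m := m) ha hb hc ha'1 ha hac rfl hcond
      have hbcs : bc a' c (a * m) = kc a' c (a * m) := (kc_eq_bc ha'1 hc (a * m)).symm
      have hIHa := IH a' ha'a c a m ha'1 (by omega) ha'c h4
      rw [hsplit, hbcs]
      have e0 : m * a = a * m := by ring
      rw [e0] at hIHa
      rcases le_or_gt a m with ham | ham
      · rw [if_pos ham]
        have hrec := IHm (m - a) (by omega) (by omega)
        rw [hrec]
        have e1 : m - a + 1 = m + 1 - a := by omega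
        rw [e1]
        have hmono : Tg (m + 1 - a) ≤ Tg (m + 1) := Tg_mono (by omega)
        omega
      · rw [if_neg (by omega)]
        have e1 : m + 1 - a = 0 := by omega
        rw [e1, Tg_zero] at hIHa
        omega
    have hKc_small : ∀ m, m + 1 ≤ c → kc a b (m * c) = Tg (m + 1) := by
      intro m hm
      have hlt : m * c < a * b := by
        have h7 : m * c ≤ (c - 1) * c := Nat.mul_le_mul_right c (by omega)
        have h8 : (c - 1) * c + c = c * c := by
          have e : (c - 1) + 1 = c := by omega
          calc (c - 1) * c + c = ((c - 1) + 1) * c := by ring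
          _ = c * c := by rw [e]
        omega
      rw [← cnt_eq_kc hb hlt]
      exact small m hm
    -- window lemma for the large regime
    have window : ∀ m, c ≤ m → kc a b (m * c) = kc a b ((m - 1) * c) + c := by
      intro m hcm
      have hmono : (m - 1) * c ≤ m * c := Nat.mul_le_mul_right c (by omega)
      have hsplit := Finset.card_filter_add_card_filter_not
        (s := (range (m * c + 1) ×ˢ range a).filter (fun p => a * p.1 + b * p.2 ≤ m * c))
        (p := fun p => a * p.1 + b * p.2 ≤ (m - 1) * c)
      have hpart1 : (((range (m * c + 1) ×ˢ range a).filter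
            (fun p => a * p.1 + b * p.2 ≤ m * c)).filter
            (fun p => a * p.1 + b * p.2 ≤ (m - 1) * c)).card = kc a b ((m - 1) * c) := by
        rw [Finset.filter_filter]
        have he : ((range (m * c + 1) ×ˢ range a).filter
            (fun p => a * p.1 + b * p.2 ≤ m * c ∧ a * p.1 + b * p.2 ≤ (m - 1) * c))
            = ((range (m * c + 1) ×ˢ range a).filter
            (fun p => a * p.1 + b * p.2 ≤ (m - 1) * c)) := by
          apply Finset.filter_congr
          intro p _
          constructor
          · rintro ⟨_, h⟩; exact h
          · intro h; exact ⟨by omega, h⟩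
        rw [he]
        exact kc_stable ha hmono a
      have hpart2 : (((range (m * c + 1) ×ˢ range a).filter
            (fun p => a * p.1 + b * p.2 ≤ m * c)).filter
            (fun p => ¬ a * p.1 + b * p.2 ≤ (m - 1) * c)).card = c := by
        have hcard : (((range (m * c + 1) ×ˢ range a).filter
            (fun p => a * p.1 + b * p.2 ≤ m * c)).filter
            (fun p => ¬ a * p.1 + b * p.2 ≤ (m - 1) * c)).card
            = (Finset.Ioc ((m - 1) * c) (m * c)).card := by
          apply Finset.card_nbij (fun p => a * p.1 + b * p.2)
          · rintro ⟨x, y⟩ hp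
            simp only [Finset.mem_coe, Finset.mem_filter, Finset.mem_product, Finset.mem_range] at hp
            rw [Finset.mem_coe, Finset.mem_Ioc]
            show (m - 1) * c < a * x + b * y ∧ a * x + b * y ≤ m * c
            omega
          · rintro ⟨x, y⟩ hp ⟨x', y'⟩ hp' heq
            simp only [Finset.coe_filter, Set.mem_setOf_eq, Finset.mem_filter,
              Finset.mem_product, Finset.mem_range] at hp hp'
            have := val_inj ha hcop (by omega : y < a) (by omega : y' < a) heq
            simp only [Prod.mk.injEq]
            omega
          · intro n hn
            simp only [Finset.coe_Ioc, Set.mem_Ioc] at hn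
            obtain ⟨hn1, hn2⟩ := hn
            have hlow : (c - 1) * c ≤ (m - 1) * c := Nat.mul_le_mul_right c (by omega)
            have hcc : (c - 1) * c + c = c * c := by
              have e : (c - 1) + 1 = c := by omega
              calc (c - 1) * c + c = ((c - 1) + 1) * c := by ring
              _ = c * c := by rw [e]
            have hfr : a * b < n + a + b := by omega
            obtain ⟨x, y, hy, hxy⟩ := frob_exists ha hcop hfr
            refine ⟨(x, y), ?_, hxy⟩
            simp only [Finset.coe_filter, Set.mem_setOf_eq, Finset.mem_filter,
              Finset.mem_product, Finset.mem_range]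
            have hx : x ≤ a * x := Nat.le_mul_of_pos_left _ (by omega)
            refine ⟨⟨⟨by omega, hy⟩, by omega⟩, by omega⟩
        rw [hcard, Nat.card_Ioc]
        have e : (m - 1) * c + c = m * c := by
          have e2 : (m - 1) + 1 = m := by omega
          calc (m - 1) * c + c = ((m - 1) + 1) * c := by ring
          _ = m * c := by rw [e2]
        omega
      have hkcdef : kc a b (m * c) = (((range (m * c + 1) ×ˢ range a).filter
            (fun p => a * p.1 + b * p.2 ≤ m * c))).card := rfl
      omega
    -- large regime by induction from m = c - 1
    have large : ∀ m, c - 1 ≤ m → kc a b (m * c) + Tg (m + 1 - c) = Tg (m + 1) := by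
      intro m hm
      induction m, hm using Nat.le_induction with
      | base =>
        have e : c - 1 + 1 - c = 0 := by omega
        rw [e, Tg_zero, hKc_small (c - 1) (by omega)]
        omega
      | succ m hm IHm =>
        have hw := window (m + 1) (by omega)
        have e : m + 1 - 1 = m := by omega
        rw [e] at hw
        have e2 : m + 1 + 1 - c = (m + 1 - c) + 1 := by omega
        rw [hw, e2, Tg_succ, Tg_succ]
        omega
    rcases le_or_gt (m + 1) c with hmc | hmc
    · have e : m + 1 - c = 0 := by omega
      rw [e, Tg_zero, hKc_small m hmc]
      omega
    · exact large m (by omega)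

/-- Triangle-count lemma for the squares semigroup `⟨α²,β²⟩`:
the number of lattice points with `α²x + β²y ≤ l·αβ` is the triangular
number `T(l+1)`, for every `l`. -/
private lemma S_master {al be a0 : ℕ} (ha0 : 1 ≤ a0) (hal : 1 ≤ al) (hbe : 1 ≤ be)
    (h3 : a0 + be = 3 * al) (hI : a0 * be = al * al + 1) (h0a : a0 ≤ al) :
    ∀ l, cnt (al * al) (be * be) (l * (al * be)) = Tg (l + 1) := by
  intro l
  induction l using Nat.strong_induction_on with
  | _ l IHl =>
  have hcond : ∀ x y : ℕ, x < be →
      ((al * al) * x + (be * be) * y ≤ l * (al * be) ↔ a0 * x + be * y ≤ al * l) := by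
    intro x y hx
    rw [mul_comm al l]
    exact cond_equiv_S hI hx
  have hsplit := cnt_split (U := al * al) (V := be * be) (W := al * be) (C := be)
    (u0 := a0) (A := al) (m := l)
    (by nlinarith) (by nlinarith) hbe ha0 hal
    (Nat.le_mul_of_pos_right al (by omega)) (by ring) hcond
  have hbcs : bc a0 be (al * l) = kc a0 be (al * l) := (kc_eq_bc ha0 hbe (al * l)).symm
  have hKL := KL a0 be al l ha0 h0a h3 hI
  rw [mul_comm l al] at hKL
  rw [hsplit, hbcs]
  rcases le_or_gt al l with hll | hll
  · rw [if_pos hll]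
    have hrec := IHl (l - al) (by omega)
    rw [hrec]
    have e1 : l - al + 1 = l + 1 - al := by omega
    rw [e1]
    have hmono : Tg (l + 1 - al) ≤ Tg (l + 1) := Tg_mono (by omega)
    omega
  · rw [if_neg (by omega)]
    have e1 : l + 1 - al = 0 := by omega
    rw [e1, Tg_zero] at hKL
    omega

private lemma fib_3F (n : ℕ) : Nat.fib n + Nat.fib (n + 4) = 3 * Nat.fib (n + 2) := by
  have A := Nat.fib_add_two (n := n)
  have B := Nat.fib_add_two (n := n + 1)
  have C := Nat.fib_add_two (n := n + 2)
  have e1 : n + 1 + 2 = n + 3 := by omega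
  have e2 : n + 2 + 2 = n + 4 := by omega
  have e3 : n + 1 + 1 = n + 2 := by omega
  have e4 : n + 2 + 1 = n + 3 := by omega
  rw [e1, e3] at B
  rw [e2, e4] at C
  omega

private lemma fib_ident (t : ℕ) :
    Nat.fib (2*t+1) * Nat.fib (2*t+1) + Nat.fib (2*t+3) * Nat.fib (2*t+3) + 1
      = 3 * (Nat.fib (2*t+1) * Nat.fib (2*t+3)) := by
  induction t with
  | zero => decide
  | succ t IH =>
    have e1 : 2*(t+1)+1 = 2*t+3 := by omega
    have e2 : 2*(t+1)+3 = 2*t+5 := by omega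
    rw [e1, e2]
    have hz := fib_3F (2*t+1)
    have e3 : 2*t+1+4 = 2*t+5 := by omega
    have e4 : 2*t+1+2 = 2*t+3 := by omega
    rw [e3, e4] at hz
    have IH' : (Nat.fib (2*t+1) : ℤ) * Nat.fib (2*t+1)
        + (Nat.fib (2*t+3) : ℤ) * Nat.fib (2*t+3) + 1
        = 3 * ((Nat.fib (2*t+1) : ℤ) * Nat.fib (2*t+3)) := by exact_mod_cast IH
    have hz' : (Nat.fib (2*t+1) : ℤ) + (Nat.fib (2*t+5) : ℤ)
        = 3 * (Nat.fib (2*t+3) : ℤ) := by exact_mod_cast hz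
    have goal' : (Nat.fib (2*t+3) : ℤ) * Nat.fib (2*t+3)
        + (Nat.fib (2*t+5) : ℤ) * Nat.fib (2*t+5) + 1
        = 3 * ((Nat.fib (2*t+3) : ℤ) * Nat.fib (2*t+5)) := by
      linear_combination IH' + ((Nat.fib (2*t+5) : ℤ) - (Nat.fib (2*t+1) : ℤ)) * hz'
    exact_mod_cast goal'

private lemma fib_ident2 (t : ℕ) :
    Nat.fib (2*t+1) * Nat.fib (2*t+5) = Nat.fib (2*t+3) * Nat.fib (2*t+3) + 1 := by
  have hz := fib_3F (2*t+1)
  have e3 : 2*t+1+4 = 2*t+5 := by omega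
  have e4 : 2*t+1+2 = 2*t+3 := by omega
  rw [e3, e4] at hz
  have hT := fib_ident t
  have hz' : (Nat.fib (2*t+1) : ℤ) + (Nat.fib (2*t+5) : ℤ)
      = 3 * (Nat.fib (2*t+3) : ℤ) := by exact_mod_cast hz
  have hT' : (Nat.fib (2*t+1) : ℤ) * Nat.fib (2*t+1)
      + (Nat.fib (2*t+3) : ℤ) * Nat.fib (2*t+3) + 1
      = 3 * ((Nat.fib (2*t+1) : ℤ) * Nat.fib (2*t+3)) := by exact_mod_cast hT
  have goal' : (Nat.fib (2*t+1) : ℤ) * Nat.fib (2*t+5)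
      = (Nat.fib (2*t+3) : ℤ) * Nat.fib (2*t+3) + 1 := by
    linear_combination ((Nat.fib (2*t+1) : ℤ)) * hz' - hT'
  exact_mod_cast goal'


/-- Case (c) of the classification: for odd `j ≥ 5` and `d = φ_{j−2}·φ_j`,
the semigroup `⟨φ_{j−2}², φ_j²⟩` satisfies the semigroup distribution
property for `d`. -/
theorem distribution_property_case_c (j : ℕ) (hodd : Odd j) (hj : 5 ≤ j) :
    SemigroupDistributionProperty
      {n : ℕ | ∃ x y : ℕ, n = x * Nat.fib (j - 2) ^ 2 + y * Nat.fib j ^ 2}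
      (Nat.fib (j - 2) * Nat.fib j) := by
  obtain ⟨t, rfl⟩ : ∃ t, j = 2 * t + 5 := by
    obtain ⟨s, hs⟩ := hodd
    exact ⟨(j - 5) / 2, by omega⟩
  have hj2 : 2 * t + 5 - 2 = 2 * t + 3 := by omega
  unfold SemigroupDistributionProperty
  intro l hl
  simp only [hj2, Set.mem_setOf_eq, pow_two]
  set al := Nat.fib (2*t+3) with hal_def
  set be := Nat.fib (2*t+5) with hbe_def
  set a0 := Nat.fib (2*t+1) with ha0_def
  have hal : 1 ≤ al := Nat.fib_pos.mpr (by omega)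
  have hbe : 1 ≤ be := Nat.fib_pos.mpr (by omega)
  have ha0 : 1 ≤ a0 := Nat.fib_pos.mpr (by omega)
  have halbe : al ≤ be := Nat.fib_mono (by omega)
  have h0a : a0 ≤ al := Nat.fib_mono (by omega)
  have hT : al * al + be * be + 1 = 3 * (al * be) := by
    have h := fib_ident (t+1)
    have e1 : 2*(t+1)+1 = 2*t+3 := by omega
    have e2 : 2*(t+1)+3 = 2*t+5 := by omega
    rw [e1, e2] at h
    exact h
  have h3F : a0 + be = 3 * al := by
    have h := fib_3F (2*t+1)
    have e3 : 2*t+1+4 = 2*t+5 := by omega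
    have e4 : 2*t+1+2 = 2*t+3 := by omega
    rw [e3, e4] at h
    exact h
  have hI : a0 * be = al * al + 1 := fib_ident2 t
  have hcop : Nat.Coprime al be := by
    have hg1 : Nat.gcd al be ∣ al := Nat.gcd_dvd_left al be
    have hg2 : Nat.gcd al be ∣ be := Nat.gcd_dvd_right al be
    have d1 : Nat.gcd al be ∣ al * al + be * be :=
      Nat.dvd_add (hg1.mul_right al) (hg2.mul_right be)
    have d2 : Nat.gcd al be ∣ 3 * (al * be) := Dvd.dvd.mul_left (hg1.mul_right be) 3
    have d3 : Nat.gcd al be ∣ 1 := by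
      have h5 : Nat.gcd al be ∣ al * al + be * be + 1 := hT ▸ d2
      exact (Nat.dvd_add_right d1).mp h5
    exact Nat.dvd_one.mp d3
  have hcop2 : Nat.Coprime (al*al) (be*be) := by
    have h1 : Nat.Coprime (al*al) be := Nat.Coprime.mul hcop hcop
    exact Nat.Coprime.mul_right h1 h1
  have hd1 : 1 ≤ al * be := by nlinarith
  have hS := S_master ha0 hal hbe h3F hI h0a
  rcases lt_or_ge l (al * be) with hld | hld
  · -- case l ≤ d - 1
    have key : {k : ℕ | (∃ x y : ℕ, k = x * (al*al) + y * (be*be))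
          ∧ (l-1)*(al*be) < k ∧ k ≤ l*(al*be)}
        = ↑((((range (l*(al*be)+1) ×ˢ range (l*(al*be)+1)).filter
            (fun p => (al*al)*p.1 + (be*be)*p.2 ≤ l*(al*be))).filter
            (fun p => ¬ ((al*al)*p.1 + (be*be)*p.2 ≤ (l-1)*(al*be)))).image
            (fun p => (al*al)*p.1 + (be*be)*p.2)) := by
      ext k
      simp only [Set.mem_setOf_eq, Finset.coe_image, Set.mem_image, Finset.mem_coe,
        Finset.mem_filter, Finset.mem_product, Finset.mem_range]
      constructor
      · rintro ⟨⟨x, y, rfl⟩, h1, h2⟩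
        have e : x * (al*al) + y * (be*be) = (al*al)*x + (be*be)*y := by ring
        have h5 : x ≤ (al*al)*x := Nat.le_mul_of_pos_left _ (by nlinarith)
        have h6 : y ≤ (be*be)*y := Nat.le_mul_of_pos_left _ (by nlinarith)
        refine ⟨(x,y), ⟨⟨⟨show x < l*(al*be)+1 by omega, show y < l*(al*be)+1 by omega⟩,
          show (al*al)*x + (be*be)*y ≤ l*(al*be) by omega⟩,
          show ¬((al*al)*x + (be*be)*y ≤ (l-1)*(al*be)) by omega⟩,
          show (al*al)*x + (be*be)*y = x * (al*al) + y * (be*be) by ring⟩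
      · rintro ⟨⟨x, y⟩, hmem, hk⟩
        have hk' : (al*al)*x + (be*be)*y = k := hk
        simp only [Finset.mem_filter, Finset.mem_product, Finset.mem_range] at hmem
        have hv1 : (al*al)*x + (be*be)*y ≤ l*(al*be) := hmem.1.2
        have hv2 : ¬ ((al*al)*x + (be*be)*y ≤ (l-1)*(al*be)) := hmem.2
        exact ⟨⟨x, y, by rw [← hk']; ring⟩, by omega, by omega⟩
    rw [key, Set.ncard_coe_finset]
    have hinj : Set.InjOn (fun p : ℕ × ℕ => (al*al)*p.1 + (be*be)*p.2)
        ↑(((range (l*(al*be)+1) ×ˢ range (l*(al*be)+1)).filter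
            (fun p => (al*al)*p.1 + (be*be)*p.2 ≤ l*(al*be))).filter
            (fun p => ¬ ((al*al)*p.1 + (be*be)*p.2 ≤ (l-1)*(al*be)))) := by
      rintro ⟨x, y⟩ hp ⟨x', y'⟩ hp' heq
      simp only [Finset.coe_filter, Set.mem_setOf_eq, Finset.mem_filter,
        Finset.mem_product, Finset.mem_range] at hp hp'
      have hcap : ∀ x1 y1 : ℕ, (al*al)*x1 + (be*be)*y1 ≤ l*(al*be) → y1 < al*al := by
        intro x1 y1 hv
        by_contra hge
        push_neg at hge
        have h5 : (be*be)*(al*al) ≤ (be*be)*y1 := Nat.mul_le_mul_left _ hge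
        have h6 : l*(al*be) ≤ ((al*be)-1)*(al*be) := Nat.mul_le_mul_right _ (by omega)
        have h7 : ((al*be)-1)*(al*be) + (al*be) = (al*be)*(al*be) := by
          have e : ((al*be)-1) + 1 = al*be := by omega
          calc ((al*be)-1)*(al*be) + (al*be) = (((al*be)-1) + 1)*(al*be) := by ring
          _ = (al*be)*(al*be) := by rw [e]
        have e8 : (be*be)*(al*al) = (al*be)*(al*be) := by ring
        omega
      have hy1 : y < al*al := hcap x y (by omega)
      have hy2 : y' < al*al := hcap x' y' (by omega)
      have heq' : (al*al)*x + (be*be)*y = (al*al)*x' + (be*be)*y' := heq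
      have := val_inj (by nlinarith : 1 ≤ al*al) hcop2 hy1 hy2 heq'
      simp only [Prod.mk.injEq]
      omega
    rw [Finset.card_image_of_injOn hinj]
    have hsplit2 := Finset.card_filter_add_card_filter_not
      (s := (range (l*(al*be)+1) ×ˢ range (l*(al*be)+1)).filter
        (fun p => (al*al)*p.1 + (be*be)*p.2 ≤ l*(al*be)))
      (p := fun p => (al*al)*p.1 + (be*be)*p.2 ≤ (l-1)*(al*be))
    have hbig : ((range (l*(al*be)+1) ×ˢ range (l*(al*be)+1)).filter
        (fun p => (al*al)*p.1 + (be*be)*p.2 ≤ l*(al*be))).card = Tg (l+1) := hS l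
    have hmono : (l-1)*(al*be) ≤ l*(al*be) := Nat.mul_le_mul_right _ (by omega)
    have hpos : (((range (l*(al*be)+1) ×ˢ range (l*(al*be)+1)).filter
        (fun p => (al*al)*p.1 + (be*be)*p.2 ≤ l*(al*be))).filter
        (fun p => (al*al)*p.1 + (be*be)*p.2 ≤ (l-1)*(al*be))).card = Tg l := by
      rw [Finset.filter_filter]
      have he : ((range (l*(al*be)+1) ×ˢ range (l*(al*be)+1)).filter
          (fun p => (al*al)*p.1 + (be*be)*p.2 ≤ l*(al*be)
            ∧ (al*al)*p.1 + (be*be)*p.2 ≤ (l-1)*(al*be)))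
          = ((range (l*(al*be)+1) ×ˢ range (l*(al*be)+1)).filter
          (fun p => (al*al)*p.1 + (be*be)*p.2 ≤ (l-1)*(al*be))) := by
        apply Finset.filter_congr
        intro p _
        constructor
        · rintro ⟨_, h⟩; exact h
        · intro h; exact ⟨by omega, h⟩
      rw [he]
      have hst := cnt_stable (u := al*al) (v := be*be) (by nlinarith) (by nlinarith)
        (hmono)
      rw [hst]
      have e9 : (l-1)*(al*be) = (l-1)*(al*be) := rfl
      have := hS (l-1)
      have e10 : l - 1 + 1 = l := by omega
      rw [e10] at this
      exact this
    have hTgs : Tg (l+1) = Tg l + (l+1) := Tg_succ l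
    have hminl : min (l+1) (al*be) = l + 1 := min_eq_left (by omega)
    rw [hminl]
    omega
  · -- case l ≥ d : the window is entirely inside the semigroup
    have key2 : {k : ℕ | (∃ x y : ℕ, k = x * (al*al) + y * (be*be))
          ∧ (l-1)*(al*be) < k ∧ k ≤ l*(al*be)}
        = ↑(Finset.Ioc ((l-1)*(al*be)) (l*(al*be))) := by
      ext k
      simp only [Set.mem_setOf_eq, Finset.coe_Ioc, Set.mem_Ioc]
      constructor
      · rintro ⟨_, h1, h2⟩; exact ⟨h1, h2⟩
      · rintro ⟨h1, h2⟩
        refine ⟨?_, h1, h2⟩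
        have hfr : (al*al) * (be*be) < k + (al*al) + (be*be) := by
          have e8 : (al*al)*(be*be) = (al*be)*(al*be) := by ring
          have h5 : ((al*be)-1)*(al*be) ≤ (l-1)*(al*be) :=
            Nat.mul_le_mul_right _ (by omega)
          have h7 : ((al*be)-1)*(al*be) + (al*be) = (al*be)*(al*be) := by
            have e : ((al*be)-1) + 1 = al*be := by omega
            calc ((al*be)-1)*(al*be) + (al*be) = (((al*be)-1) + 1)*(al*be) := by ring
            _ = (al*be)*(al*be) := by rw [e]
          omega
        obtain ⟨x, y, _, hxy⟩ := frob_exists (by nlinarith : 1 ≤ al*al) hcop2 hfr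
        exact ⟨x, y, by rw [← hxy]; ring⟩
    rw [key2, Set.ncard_coe_finset, Nat.card_Ioc]
    have h5 : (l-1)*(al*be) + (al*be) = l*(al*be) := by
      have e : (l-1) + 1 = l := by omega
      calc (l-1)*(al*be) + (al*be) = ((l-1) + 1)*(al*be) := by ring
      _ = l*(al*be) := by rw [e]
    have hminr : min (l+1) (al*be) = al*be := min_eq_right (by omega)
    rw [hminr]
    omega
end

section
/- Let (φ_j) denote the Fibonacci numbers (φ_0 = 0, φ_1 = 1, φ_{j+2} = φ_{j+1} + φ_j). For every odd integer j ≥ 5, setting d := φ_j, the numerical semigroup Γ generated by φ_{j−2} and φ_{j+2} satisfies the semigroup distribution property for d: for every integer l ≥ 1 the half-open interval ((l − 1)d, ld] contains exactly min(l + 1, d) elements of Γ. -/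
/-!
Write `a = φ_{j-2}`, `b = φ_{j+2}`, `d = φ_j`. Then `a + b = 3d` and, by Catalan's identity for
odd `j`, `ab = d² + 1`; these two relations alone imply the distribution property.
They force `gcd(a, b) = 1`, so below `ab` every element of `Γ = ⟨a, b⟩` is `xa + yb` for a
unique `(x, y)`, and `#(Γ ∩ [0, n])` is the number `T(n)` of lattice points with `xa + yb ≤ n`.
Removing the two axes and shifting the rest by `(1, 1)` gives
`T(n) = ⌊n/a⌋ + ⌊n/b⌋ + 1 + T(n - 3d)`, while `⌊ld/a⌋ + ⌊ld/b⌋ = 3l - 1` for `0 < l < d`.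
Hence `T(ld) = (l+1)(l+2)/2`, and `((l-1)d, ld]` contains `l + 1` elements of `Γ`.
For `l ≥ d` the interval lies beyond the Frobenius number `ab - a - b = d² - 3d + 1`,
so it contains `d` elements.
-/

open Nat

theorem coprime_of_add_eq_of_mul_eq {a b d : ℕ} (hsum : a + b = 3 * d)
    (hprod : a * b = d ^ 2 + 1) : a.Coprime b := by
  have hdvd_prod : a.gcd b ∣ d ^ 2 + 1 := hprod ▸ (Nat.gcd_dvd_left a b).mul_right b
  have hdvd_three : a.gcd b ∣ 3 := by
    have hdvd_sum : a.gcd b ∣ 3 * d :=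
      hsum ▸ Nat.dvd_add (Nat.gcd_dvd_left a b) (Nat.gcd_dvd_right a b)
    have h := Nat.dvd_sub (hdvd_prod.mul_left 3) (hdvd_sum.mul_left d)
    rwa [show 3 * (d ^ 2 + 1) - d * (3 * d) = 3 by ring_nf; omega] at h
  refine ((Nat.dvd_prime Nat.prime_three).mp hdvd_three).resolve_right fun h => ?_
  rw [h, ← ZMod.natCast_eq_zero_iff] at hdvd_prod
  push_cast at hdvd_prod
  generalize (d : ZMod 3) = x at hdvd_prod
  revert x
  decide

theorem div_add_div_eq_of_add_eq_of_mul_eq {a b d l : ℕ} (hsum : a + b = 3 * d)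
    (hprod : a * b = d ^ 2 + 1) (hl : 0 < l) (hld : l < d) :
    l * d / a + l * d / b = 3 * l - 1 := by
  obtain ⟨ha, hb⟩ : 0 < a ∧ 0 < b :=
    CanonicallyOrderedAdd.mul_pos.mp (by rw [hprod]; positivity)
  have hqa := Nat.div_add_mod (l * d) a
  have hqb := Nat.div_add_mod (l * d) b
  have hra := Nat.mod_lt (l * d) ha
  have hrb := Nat.mod_lt (l * d) hb
  generalize l * d / a = qa, l * d % a = ra, l * d / b = qb, l * d % b = rb at *
  zify at *
  -- `ab * (3l - qa - qb)` equals `b ra + a rb + 3l`, which lies strictly between `0` and `2ab`.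
  have key : (a * b : ℤ) * (3 * l - qa - qb) = b * ra + a * rb + 3 * l := by
    linear_combination -(b * hqa) - a * hqb - l * d * hsum + 3 * l * hprod
  have hab : (0 : ℤ) < a * b := by positivity
  have hlow : 0 < (a * b : ℤ) * (3 * l - qa - qb) := by rw [key]; positivity
  have hupp : (a * b : ℤ) * (3 * l - qa - qb) < a * b * 2 := by rw [key]; nlinarith
  have h1 := pos_of_mul_pos_right hlow hab.le
  have h2 := lt_of_mul_lt_mul_left hupp hab.le
  omega

def latticeTriangle (a b n : ℕ) : Set (ℕ × ℕ) := {p | p.1 * a + p.2 * b ≤ n}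

section latticeTriangle

variable {a b : ℕ}

theorem latticeTriangle_finite (ha : 0 < a) (hb : 0 < b) (n : ℕ) :
    (latticeTriangle a b n).Finite :=
  ((Set.finite_Iic n).prod (Set.finite_Iic n)).subset fun p hp => by
    simp only [latticeTriangle, Set.mem_ofPred_eq] at hp
    simp only [Set.mem_prod, Set.mem_Iic]
    constructor <;> nlinarith

theorem ncard_latticeTriangle (ha : 0 < a) (hb : 0 < b) (n : ℕ) :
    (latticeTriangle a b n).ncard =
      n / a + n / b + 1 + {p ∈ latticeTriangle a b n | 0 < p.1 ∧ 0 < p.2}.ncard := by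
  have haxes : latticeTriangle a b n ∩ {p | p.1 = 0 ∨ p.2 = 0} =
      ↑(Finset.Iic (n / a) ×ˢ {0} ∪ {0} ×ˢ Finset.Ioc 0 (n / b)) := by
    ext ⟨x, y⟩
    simp only [latticeTriangle, Set.mem_inter_iff, Set.mem_ofPred_eq, Finset.coe_union,
      Finset.coe_product, Finset.coe_Iic, Finset.coe_singleton, Finset.coe_Ioc, Set.mem_union,
      Set.mem_prod, Set.mem_Iic, Set.mem_singleton_iff, Set.mem_Ioc, Nat.le_div_iff_mul_le ha,
      Nat.le_div_iff_mul_le hb]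
    constructor
    · rintro ⟨h, rfl | rfl⟩
      · rcases Nat.eq_zero_or_pos y with rfl | hy
        · simp
        · right; simp_all
      · left; simp_all
    · rintro (⟨h, rfl⟩ | ⟨rfl, -, h⟩) <;> simp_all
  have hdisj : Disjoint (Finset.Iic (n / a) ×ˢ {0}) ({0} ×ˢ Finset.Ioc 0 (n / b)) := by
    rw [Finset.disjoint_left]
    rintro ⟨x, y⟩ h h'
    simp only [Finset.mem_product, Finset.mem_singleton, Finset.mem_Ioc] at h h'
    omega
  have hinterior : latticeTriangle a b n \ {p | p.1 = 0 ∨ p.2 = 0} =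
      {p ∈ latticeTriangle a b n | 0 < p.1 ∧ 0 < p.2} := by
    ext p
    simp only [Set.mem_sdiff, Set.mem_ofPred_eq]
    exact and_congr_right fun _ => by omega
  rw [← Set.ncard_inter_add_ncard_sdiff_eq_ncard _ _ (latticeTriangle_finite ha hb n), haxes,
    hinterior, Set.ncard_coe_finset, Finset.card_union_of_disjoint hdisj]
  simp only [Finset.card_product, Nat.card_Iic, Nat.card_Ioc, Finset.card_singleton,
    Nat.sub_zero]
  ring

theorem latticeTriangle_interior_eq_empty {n : ℕ} (hn : n < a + b) :
    {p ∈ latticeTriangle a b n | 0 < p.1 ∧ 0 < p.2} = ∅ := by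
  ext ⟨x, y⟩
  simp only [latticeTriangle, Set.mem_ofPred_eq, Set.mem_empty_iff_false, iff_false]
  rintro ⟨h, hx, hy⟩
  nlinarith

theorem ncard_latticeTriangle_interior_add (n : ℕ) :
    {p ∈ latticeTriangle a b (n + (a + b)) | 0 < p.1 ∧ 0 < p.2}.ncard =
      (latticeTriangle a b n).ncard := by
  have himage : {p ∈ latticeTriangle a b (n + (a + b)) | 0 < p.1 ∧ 0 < p.2} =
      (· + (1, 1)) '' latticeTriangle a b n := by
    ext ⟨x, y⟩
    simp only [latticeTriangle, Set.mem_ofPred_eq, Set.mem_image, Prod.exists, Prod.mk_add_mk,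
      Prod.mk.injEq]
    constructor
    · rintro ⟨h, hx, hy⟩
      obtain ⟨x, rfl⟩ := Nat.exists_eq_add_one_of_ne_zero hx.ne'
      obtain ⟨y, rfl⟩ := Nat.exists_eq_add_one_of_ne_zero hy.ne'
      exact ⟨x, y, by linarith, rfl, rfl⟩
    · rintro ⟨x, y, h, rfl, rfl⟩
      exact ⟨by linarith, by omega, by omega⟩
  rw [himage, Set.ncard_image_of_injective _ (add_left_injective _)]

end latticeTriangle

theorem two_mul_ncard_latticeTriangle_mul {a b d l : ℕ} (hsum : a + b = 3 * d)
    (hprod : a * b = d ^ 2 + 1) (hld : l < d) :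
    2 * (latticeTriangle a b (l * d)).ncard = (l + 1) * (l + 2) := by
  obtain ⟨ha, hb⟩ : 0 < a ∧ 0 < b :=
    CanonicallyOrderedAdd.mul_pos.mp (by rw [hprod]; positivity)
  induction l using Nat.strong_induction_on with
  | _ l ih =>
    rw [ncard_latticeTriangle ha hb]
    rcases Nat.eq_zero_or_pos l with rfl | hl
    · rw [zero_mul, latticeTriangle_interior_eq_empty (by omega)]
      simp
    rw [div_add_div_eq_of_add_eq_of_mul_eq hsum hprod hl hld]
    rcases lt_or_ge l 3 with hl3 | hl3
    · rw [latticeTriangle_interior_eq_empty (by nlinarith), Set.ncard_empty]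
      interval_cases l <;> rfl
    · obtain ⟨m, rfl⟩ : ∃ m, l = m + 3 := ⟨l - 3, by omega⟩
      have hm := ih m (by omega) (by omega)
      rw [show (m + 3) * d = m * d + (a + b) by rw [hsum]; ring,
        ncard_latticeTriangle_interior_add, Nat.sub_add_cancel (by omega), mul_add, hm]
      ring

def pairSemigroup (a b : ℕ) : Set ℕ := {n | ∃ x y : ℕ, n = x * a + y * b}

theorem ncard_pairSemigroup_le_eq_ncard_latticeTriangle {a b n : ℕ} (hab : a.Coprime b)
    (hn : n < a * b) :
    {k | k ∈ pairSemigroup a b ∧ k ≤ n}.ncard = (latticeTriangle a b n).ncard := by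
  have hb : 0 < b := Nat.pos_of_ne_zero fun h => by simp [h] at hn
  have himage : {k | k ∈ pairSemigroup a b ∧ k ≤ n} =
      (fun p : ℕ × ℕ => p.1 * a + p.2 * b) '' latticeTriangle a b n := by
    ext k
    simp only [pairSemigroup, latticeTriangle, Set.mem_ofPred_eq, Set.mem_image, Prod.exists]
    constructor
    · rintro ⟨⟨x, y, rfl⟩, h⟩
      exact ⟨x, y, h, rfl⟩
    · rintro ⟨x, y, h, rfl⟩
      exact ⟨⟨x, y, rfl⟩, h⟩
  rw [himage, Set.InjOn.ncard_image]
  rintro ⟨x, y⟩ hxy ⟨x', y'⟩ hxy' h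
  simp only [latticeTriangle, Set.mem_ofPred_eq] at hxy hxy' h
  have hmod : x * a ≡ x' * a [MOD b] := by
    unfold Nat.ModEq
    rw [← Nat.add_mul_mod_self_right (x * a) y b, h, Nat.add_mul_mod_self_right]
  have hx : x = x' :=
    (Nat.ModEq.cancel_right_of_coprime hab.symm hmod).eq_of_lt_of_lt
      (Nat.lt_of_mul_lt_mul_right (a := a) (by nlinarith))
      (Nat.lt_of_mul_lt_mul_right (a := a) (by nlinarith))
  subst hx
  have hy : y = y' := Nat.eq_of_mul_eq_mul_right hb (by omega)
  rw [hy]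

theorem mem_pairSemigroup_of_lt {a b k : ℕ} (hab : a.Coprime b) (hk : a * b - a - b < k) :
    k ∈ pairSemigroup a b := by
  rcases Nat.lt_or_ge 1 a with ha | ha
  · rcases Nat.lt_or_ge 1 b with hb | hb
    · have hfrob := (frobeniusNumber_pair hab ha hb).2
      by_contra hnot
      refine absurd (hfrob fun hmem => hnot ?_) (not_le.mpr hk)
      obtain ⟨x, y, hxy⟩ := (AddSubmonoid.mem_closure_pair _ _ _).mp hmem
      exact ⟨x, y, by rw [← hxy, smul_eq_mul, smul_eq_mul, mul_comm x, mul_comm y]⟩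
    · interval_cases b
      · exact absurd ((Nat.coprime_zero_right a).mp hab) ha.ne'
      · exact ⟨0, k, by ring⟩
  · interval_cases a
    · exact ⟨0, k, by rw [(Nat.coprime_zero_left b).mp hab]; ring⟩
    · exact ⟨k, 0, by ring⟩

theorem ncard_pairSemigroup_Ioc_of_lt {a b d m : ℕ} (hsum : a + b = 3 * d)
    (hprod : a * b = d ^ 2 + 1) (hmd : m + 1 < d) :
    {k | k ∈ pairSemigroup a b ∧ m * d < k ∧ k ≤ (m + 1) * d}.ncard = m + 2 := by
  have hab := coprime_of_add_eq_of_mul_eq hsum hprod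
  have hsdiff : {k | k ∈ pairSemigroup a b ∧ m * d < k ∧ k ≤ (m + 1) * d} =
      {k | k ∈ pairSemigroup a b ∧ k ≤ (m + 1) * d} \
        {k | k ∈ pairSemigroup a b ∧ k ≤ m * d} := by
    ext k
    simp only [Set.mem_sdiff, Set.mem_ofPred_eq, not_and, not_le]
    exact ⟨fun ⟨hk, hlo, hhi⟩ => ⟨⟨hk, hhi⟩, fun _ => hlo⟩,
      fun ⟨⟨hk, hhi⟩, hlo⟩ => ⟨hk, hlo hk, hhi⟩⟩
  have hle : m * d ≤ (m + 1) * d := by nlinarith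
  have hlt : (m + 1) * d < a * b := by nlinarith
  have hsub : {k | k ∈ pairSemigroup a b ∧ k ≤ m * d} ⊆
      {k | k ∈ pairSemigroup a b ∧ k ≤ (m + 1) * d} := fun k hk => ⟨hk.1, hk.2.trans hle⟩
  rw [hsdiff, Set.ncard_sdiff hsub ((Set.finite_Iic (m * d)).subset fun k hk => hk.2),
    ncard_pairSemigroup_le_eq_ncard_latticeTriangle hab hlt,
    ncard_pairSemigroup_le_eq_ncard_latticeTriangle hab (hle.trans_lt hlt)]
  have hnext := two_mul_ncard_latticeTriangle_mul hsum hprod hmd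
  have hprev := two_mul_ncard_latticeTriangle_mul hsum hprod (l := m) (by omega)
  have : (m + 1 + 1) * (m + 1 + 2) = (m + 1) * (m + 2) + 2 * (m + 2) := by ring
  omega

theorem ncard_pairSemigroup_Ioc_of_le {a b d m : ℕ} (hsum : a + b = 3 * d)
    (hprod : a * b = d ^ 2 + 1) (hdm : d ≤ m + 1) :
    {k | k ∈ pairSemigroup a b ∧ m * d < k ∧ k ≤ (m + 1) * d}.ncard = d := by
  have hIoc : {k | k ∈ pairSemigroup a b ∧ m * d < k ∧ k ≤ (m + 1) * d} =
      Set.Ioc (m * d) ((m + 1) * d) := by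
    ext k
    simp only [Set.mem_ofPred_eq, Set.mem_Ioc, and_iff_right_iff_imp]
    refine fun hk => mem_pairSemigroup_of_lt (coprime_of_add_eq_of_mul_eq hsum hprod)
      (lt_of_le_of_lt ?_ hk.1)
    obtain ⟨e, rfl⟩ := Nat.exists_eq_add_one_of_ne_zero (show d ≠ 0 by rintro rfl; simp_all)
    have hle : e * (e + 1) ≤ m * (e + 1) := Nat.mul_le_mul_right _ (by omega)
    have hsq : (e + 1) ^ 2 = e * (e + 1) + (e + 1) := by ring
    omega
  rw [hIoc, Set.ncard_Ioc_nat, add_mul, one_mul, Nat.add_sub_cancel_left]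

theorem semigroupDistributionProperty_pairSemigroup {a b d : ℕ} (hsum : a + b = 3 * d)
    (hprod : a * b = d ^ 2 + 1) : SemigroupDistributionProperty (pairSemigroup a b) d := by
  intro l hl
  obtain ⟨m, rfl⟩ := Nat.exists_eq_add_one_of_ne_zero (Nat.one_le_iff_ne_zero.mp hl)
  rw [Nat.add_sub_cancel]
  rcases lt_or_ge (m + 1) d with hmd | hdm
  · rw [min_eq_left hmd, ncard_pairSemigroup_Ioc_of_lt hsum hprod hmd]
  · rw [min_eq_right (by omega), ncard_pairSemigroup_Ioc_of_le hsum hprod hdm]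

theorem fib_add_fib_add_four (k : ℕ) : fib k + fib (k + 4) = 3 * fib (k + 2) := by
  have h2 : fib (k + 2) = fib k + fib (k + 1) := fib_add_two
  have h3 : fib (k + 3) = fib (k + 1) + fib (k + 2) := fib_add_two
  have h4 : fib (k + 4) = fib (k + 2) + fib (k + 3) := fib_add_two
  omega

theorem fib_mul_fib_add_four {k : ℕ} (hk : Odd k) :
    fib k * fib (k + 4) = fib (k + 2) ^ 2 + 1 := by
  have h := Int.fib_add_sq_sub_fib_mul_fib_add_two_mul k 2
  rw [show (k : ℤ) + 2 = (k + 2 : ℕ) by push_cast; ring,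
    show (k : ℤ) + 2 * 2 = (k + 4 : ℕ) by push_cast; ring] at h
  simp only [Int.fib_natCast, Int.natAbs_natCast, hk.neg_one_pow, Int.fib_two] at h
  zify
  linear_combination -h

/-- Case (d) of the classification: for odd `j ≥ 5` and `d = φ_j`, the
semigroup `⟨φ_{j−2}, φ_{j+2}⟩` satisfies the semigroup distribution property
for `d`. -/
theorem distribution_property_case_d (j : ℕ) (hodd : Odd j) (hj : 5 ≤ j) :
    SemigroupDistributionProperty
      {n : ℕ | ∃ x y : ℕ, n = x * Nat.fib (j - 2) + y * Nat.fib (j + 2)}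
      (Nat.fib j) := by
  obtain ⟨k, rfl⟩ : ∃ k, j = k + 2 := ⟨j - 2, by omega⟩
  have hk : Odd k := by simpa [Nat.odd_add] using hodd
  rw [Nat.add_sub_cancel]
  exact semigroupDistributionProperty_pairSemigroup (fib_add_fib_add_four k)
    (fib_mul_fib_add_four hk)
end

section
/- The numerical semigroup Γ generated by 3 and 22 satisfies the semigroup distribution property for d = 8: for every integer l ≥ 1 the half-open interval (8(l − 1), 8l] contains exactly min(l + 1, 8) elements of Γ. -/
namespace Nat

theorem exists_mul_add_mul_eq_iff_exists_lt {a b n : ℕ} (ha : 0 < a) :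
    (∃ x y : ℕ, n = x * a + y * b) ↔ ∃ y < a, y * b ≤ n ∧ a ∣ n - y * b := by
  constructor
  · rintro ⟨x, y, rfl⟩
    refine ⟨y % a, Nat.mod_lt y ha, ?_, ?_⟩
    · exact Nat.le_add_left_of_le (Nat.mul_le_mul_right b (Nat.mod_le y a))
    · have hy : y * b = y % a * b + a * (y / a * b) := by
        rw [← mul_assoc, ← add_mul, Nat.mod_add_div]
      rw [hy, ← add_assoc, add_right_comm, Nat.add_sub_cancel]
      exact dvd_add (dvd_mul_left a x) (dvd_mul_right a _)
  · rintro ⟨y, -, hle, ⟨x, hx⟩⟩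
    exact ⟨x, y, by rw [mul_comm x a, ← hx, Nat.sub_add_cancel hle]⟩

theorem setOf_exists_mul_add_mul_eq (a b : ℕ) :
    {n : ℕ | ∃ x y : ℕ, n = x * a + y * b} = AddSubmonoid.closure {a, b} := by
  ext n
  simp only [Set.mem_ofPred_eq, SetLike.mem_coe, AddSubmonoid.mem_closure_pair, smul_eq_mul]
  exact ⟨fun ⟨x, y, h⟩ => ⟨x, y, h.symm⟩, fun ⟨x, y, h⟩ => ⟨x, y, h.symm⟩⟩

end Nat

theorem ncard_setOf_mem_Ioc {α : Type*} [Preorder α] [LocallyFiniteOrder α] (Γ : Set α)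
    [DecidablePred (· ∈ Γ)] (lo hi : α) :
    {k | k ∈ Γ ∧ lo < k ∧ k ≤ hi}.ncard = ((Finset.Ioc lo hi).filter (· ∈ Γ)).card := by
  rw [← Set.ncard_coe_finset]
  congr 1
  ext k
  simp [and_comm]

theorem FrobeniusNumber.ncard_setOf_mem_Ioc {f : ℕ} {s : Set ℕ} (hf : FrobeniusNumber f s)
    {lo hi : ℕ} (hlo : f ≤ lo) :
    {k | k ∈ (AddSubmonoid.closure s : Set ℕ) ∧ lo < k ∧ k ≤ hi}.ncard = hi - lo := by
  have hmem := (frobeniusNumber_iff.mp hf).2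
  rw [← Nat.card_Ioc, ← Set.ncard_coe_finset]
  congr 1
  ext k
  simp only [Set.mem_ofPred_eq, Finset.coe_Ioc, Set.mem_Ioc, and_iff_right_iff_imp]
  exact fun h => hmem k (by omega)

/-- The sporadic case (e): the semigroup `⟨3, 22⟩` of the cusp of the
Orevkov–Artal Bartolo curve of degree 8 satisfies the semigroup distribution
property for `d = 8`. -/
theorem distribution_property_case_e :
    SemigroupDistributionProperty
      {n : ℕ | ∃ x y : ℕ, n = x * 3 + y * 22} 8 := by
  intro l hl
  rcases le_or_gt l 6 with hsmall | hlarge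
  · have hΓ : {n : ℕ | ∃ x y : ℕ, n = x * 3 + y * 22} =
        {n : ℕ | ∃ y < 3, y * 22 ≤ n ∧ 3 ∣ n - y * 22} :=
      Set.ext fun n => Nat.exists_mul_add_mul_eq_iff_exists_lt (by norm_num)
    rw [hΓ, ncard_setOf_mem_Ioc]
    interval_cases l <;> decide
  · have hf : FrobeniusNumber 41 {3, 22} :=
      frobeniusNumber_pair (by norm_num) (by norm_num) (by norm_num)
    rw [Nat.setOf_exists_mul_add_mul_eq, hf.ncard_setOf_mem_Ioc (by omega)]
    omega
end

section
/- The numerical semigroup Γ generated by 8, 28 and 73 satisfies the semigroup distribution property for d = 17: for every integer l ≥ 1 the half-open interval (17(l − 1), 17l] contains exactly min(l + 1, 17) elements of Γ. -/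
theorem exists_add_mul_iff_exists_lt {a b c p q n : ℕ} (hp : a ∣ p * b) (hq : a ∣ q * c)
    (hp₀ : 0 < p) (hq₀ : 0 < q) :
    (∃ x y z : ℕ, n = x * a + y * b + z * c) ↔
      ∃ y < p, ∃ z < q, y * b + z * c ≤ n ∧ a ∣ n - y * b - z * c := by
  constructor
  · rintro ⟨x, y, z, rfl⟩
    have hsplit : x * a + y * b + z * c =
        y % p * b + z % q * c + (x * a + y / p * (p * b) + z / q * (q * c)) := by
      linear_combination b * (Nat.div_add_mod y p).symm + c * (Nat.div_add_mod z q).symm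
    refine ⟨y % p, Nat.mod_lt y hp₀, z % q, Nat.mod_lt z hq₀, by omega, ?_⟩
    rw [hsplit, Nat.sub_sub, Nat.add_sub_cancel_left]
    exact dvd_add (dvd_add (dvd_mul_left a x) (hp.mul_left _)) (hq.mul_left _)
  · rintro ⟨y, -, z, -, hle, k, hk⟩
    exact ⟨k, y, z, by rw [mul_comm k]; omega⟩

theorem forall_le_mem_of_add_mem {S : Set ℕ} {a m : ℕ} (ha : 0 < a)
    (hadd : ∀ n ∈ S, n + a ∈ S) (hrun : ∀ n, m ≤ n → n < m + a → n ∈ S) :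
    ∀ n, m ≤ n → n ∈ S := by
  intro n
  induction n using Nat.strong_induction_on with
  | _ n ih =>
    intro hmn
    rcases lt_or_ge n (m + a) with hlt | hge
    · exact hrun n hmn hlt
    · have hnext := hadd _ (ih (n - a) (by omega) (by omega))
      rwa [Nat.sub_add_cancel (by omega)] at hnext

theorem ncard_sep_Ioc_eq_card_filter (S : Set ℕ) [DecidablePred (· ∈ S)] (a b : ℕ) :
    {k | k ∈ S ∧ a < k ∧ k ≤ b}.ncard = ((Finset.Ioc a b).filter (· ∈ S)).card := by
  rw [← Set.ncard_coe_finset]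
  congr 1
  ext k
  simp [and_comm]

theorem ncard_sep_Ioc_of_forall_lt_mem {S : Set ℕ} {f a : ℕ} (hS : ∀ n, f < n → n ∈ S)
    (ha : f ≤ a) (b : ℕ) : {k | k ∈ S ∧ a < k ∧ k ≤ b}.ncard = b - a := by
  have hIoc : {k | k ∈ S ∧ a < k ∧ k ≤ b} = Set.Ioc a b :=
    Set.ext fun k => ⟨fun h => h.2, fun h => ⟨hS k (ha.trans_lt h.1), h⟩⟩
  rw [hIoc, Set.ncard_Ioc_nat]

def gamma8_28_73 : Set ℕ := {n | ∃ x y z : ℕ, n = x * 8 + y * 28 + z * 73}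

theorem mem_gamma8_28_73_iff (n : ℕ) :
    n ∈ gamma8_28_73 ↔ ∃ y < 2, ∃ z < 8, y * 28 + z * 73 ≤ n ∧ 8 ∣ n - y * 28 - z * 73 :=
  exists_add_mul_iff_exists_lt (by norm_num) (by norm_num) (by norm_num) (by norm_num)

instance : DecidablePred (· ∈ gamma8_28_73) :=
  fun n => decidable_of_iff _ (mem_gamma8_28_73_iff n).symm

theorem add_eight_mem_gamma8_28_73 : ∀ n ∈ gamma8_28_73, n + 8 ∈ gamma8_28_73 := by
  rintro n ⟨x, y, z, rfl⟩
  exact ⟨x + 1, y, z, by ring⟩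

theorem mem_gamma8_28_73_of_lt {n : ℕ} (hn : 239 < n) : n ∈ gamma8_28_73 :=
  forall_le_mem_of_add_mem (by norm_num) add_eight_mem_gamma8_28_73
    (fun n h₁ h₂ => by interval_cases n <;> decide) n hn

/-- The key claim of the counterexample to `Conjecture C`: the semigroup
`⟨8, 28, 73⟩` satisfies the semigroup distribution property for `d = 17`. -/
theorem distribution_property_8_28_73 :
    SemigroupDistributionProperty
      {n : ℕ | ∃ x y z : ℕ, n = x * 8 + y * 28 + z * 73} 17 := by
  show SemigroupDistributionProperty gamma8_28_73 17
  intro l hl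
  rcases le_or_gt l 15 with hsmall | hlarge
  · rw [ncard_sep_Ioc_eq_card_filter]
    interval_cases l <;> decide
  · rw [ncard_sep_Ioc_of_forall_lt_mem (fun _ => mem_gamma8_28_73_of_lt)
      (by omega : 239 ≤ (l - 1) * 17)]
    omega
end

section
/- Let d ≥ 3 be an integer and let Γ be a symmetric numerical semigroup with exactly δ = (d − 1)(d − 2)/2 gaps. Define Q(t) := Σ_{k∉Γ} (1 + t + ⋯ + t^{k−1}) ∈ ℤ[t], Δ(t) := 1 + δ(t − 1) + (t − 1)²Q(t) ∈ ℤ[t], and c_l := #{k ∈ Γ : k ≤ ld} for 0 ≤ l ≤ d − 3. Then for every complex number t with t^d ≠ 1: (1/d)·Σ_{ξ: ξ^d = 1} Δ(ξt)/(1 − ξt)² − (1 − t^{d²})/(1 − t^d)³ = Σ_{l=0}^{d−3} (c_l − (l + 1)(l + 2)/2)·t^{(d−3−l)d}, where the sum on the left is over all d-th roots of unity ξ in ℂ. -/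
/-!
Put `u = t ^ d`. Averaging a function of `ξ t` over the `d`-th roots of unity `ξ` keeps
exactly the powers of `t` divisible by `d`; as `Δ(x) = 1 - (1 - x) ∑_{k ∉ Γ} x ^ k`, the
left-hand side becomes
`(1 + (d - 1) u) / (1 - u)² - ∑_{k ∉ Γ} u ^ ⌈k / d⌉ / (1 - u) - (1 - u ^ d) / (1 - u)³`.
On the right, `k ↦ 2δ - 1 - k` exchanges elements and gaps of `Γ` below `2δ = (d - 3) d + 2`,
and every gap lies below `2δ`, so `c_l = δ - #{k ∉ Γ | k ≤ (d - 3 - l) d}`. Summation by parts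
turns these gap counts back into `∑_{k ∉ Γ} u ^ ⌈k / d⌉`, and what is left is a closed form for
`∑ (l + 1)(l + 2)/2 · u ^ (d - 3 - l)`, obtained from the Horner recursion of the sum.
-/

open Polynomial Finset

theorem Nat.filter_dvd_Ico_add_eq_singleton {d : ℕ} (hd : 0 < d) (k : ℕ) :
    (Ico k (k + d)).filter (d ∣ ·) = {d * (k ⌈/⌉ d)} := by
  ext i
  simp only [mem_filter, mem_Ico, mem_singleton]
  constructor
  · rintro ⟨⟨hki, hik⟩, m, rfl⟩
    have h₁ : k ⌈/⌉ d ≤ m := (ceilDiv_le_iff_le_mul hd).2 hki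
    have h₂ : m ≤ k ⌈/⌉ d := by
      rw [Nat.ceilDiv_eq_add_pred_div, Nat.le_div_iff_mul_le hd, mul_comm]
      omega
    rw [le_antisymm h₁ h₂]
  · rintro rfl
    refine ⟨⟨le_smul_ceilDiv hd, ?_⟩, dvd_mul_right _ _⟩
    have := Nat.mul_div_le (k + d - 1) d
    rw [Nat.ceilDiv_eq_add_pred_div]
    omega

section RootsOfUnity

variable {K : Type*} [Field K] {d : ℕ} {ζ : K}

theorem IsPrimitiveRoot.nthRootsFinset_one_eq_image [DecidableEq K] (hζ : IsPrimitiveRoot ζ d) :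
    nthRootsFinset d (1 : K) = (range d).image (ζ ^ ·) := by
  rw [nthRootsFinset_def, hζ.nthRoots_eq (one_pow d), Multiset.toFinset_map]
  simp

theorem IsPrimitiveRoot.sum_nthRootsFinset_pow (hζ : IsPrimitiveRoot ζ d) (m : ℕ) :
    ∑ ξ ∈ nthRootsFinset d (1 : K), ξ ^ m = if d ∣ m then (d : K) else 0 := by
  classical
  rw [hζ.nthRootsFinset_one_eq_image,
    sum_image fun i hi j hj ↦ hζ.pow_inj (mem_range.1 hi) (mem_range.1 hj)]
  simp_rw [← pow_mul, mul_comm _ m, pow_mul]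
  split_ifs with hdm
  · simp [(hζ.pow_eq_one_iff_dvd m).2 hdm]
  · have hζm : ζ ^ m ≠ 1 := mt (hζ.pow_eq_one_iff_dvd m).1 hdm
    rw [geom_sum_eq hζm, ← pow_mul, mul_comm, pow_mul, hζ.pow_eq_one, one_pow, sub_self,
      zero_div]

theorem mul_pow_eq_of_mem_nthRootsFinset {ξ : K} (hξ : ξ ∈ nthRootsFinset d (1 : K)) (t : K) :
    (ξ * t) ^ d = t ^ d := by
  rcases d.eq_zero_or_pos with rfl | hd
  · simp
  · rw [mul_pow, (mem_nthRootsFinset hd 1).1 hξ, one_mul]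

theorem one_sub_mul_ne_zero_of_mem_nthRootsFinset {ξ t : K} (hξ : ξ ∈ nthRootsFinset d (1 : K))
    (ht : t ^ d ≠ 1) : 1 - ξ * t ≠ 0 := by
  rw [sub_ne_zero]
  intro h
  rw [← mul_pow_eq_of_mem_nthRootsFinset hξ, ← h, one_pow] at ht
  exact ht rfl

theorem IsPrimitiveRoot.sum_nthRootsFinset_mul_pow_div_one_sub (hζ : IsPrimitiveRoot ζ d)
    (hd : 0 < d) {t : K} (ht : t ^ d ≠ 1) (k : ℕ) :
    ∑ ξ ∈ nthRootsFinset d (1 : K), (ξ * t) ^ k / (1 - ξ * t)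
      = d * (t ^ d) ^ (k ⌈/⌉ d) / (1 - t ^ d) := by
  have hexpand : ∀ ξ ∈ nthRootsFinset d (1 : K),
      (ξ * t) ^ k / (1 - ξ * t) = (∑ i ∈ Ico k (k + d), (ξ * t) ^ i) / (1 - t ^ d) := by
    intro ξ hξ
    rw [div_eq_div_iff (one_sub_mul_ne_zero_of_mem_nthRootsFinset hξ ht) (sub_ne_zero.2 ht.symm),
      geom_sum_Ico_mul_neg _ (Nat.le_add_right k d), pow_add, mul_pow_eq_of_mem_nthRootsFinset hξ]
    ring
  rw [sum_congr rfl hexpand, ← sum_div, sum_comm]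
  simp_rw [mul_pow, ← sum_mul, hζ.sum_nthRootsFinset_pow, ite_mul, zero_mul]
  rw [← sum_filter, Nat.filter_dvd_Ico_add_eq_singleton hd, sum_singleton, pow_mul]

theorem IsPrimitiveRoot.sum_nthRootsFinset_one_div_one_sub_mul_sq (hζ : IsPrimitiveRoot ζ d)
    (hd : 0 < d) {t : K} (ht : t ^ d ≠ 1) :
    ∑ ξ ∈ nthRootsFinset d (1 : K), 1 / (1 - ξ * t) ^ 2
      = d * (1 + (d - 1) * t ^ d) / (1 - t ^ d) ^ 2 := by
  have hu : 1 - t ^ d ≠ 0 := sub_ne_zero.2 ht.symm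
  have hexpand : ∀ ξ ∈ nthRootsFinset d (1 : K),
      1 / (1 - ξ * t) ^ 2 = (∑ j ∈ range d, (ξ * t) ^ j / (1 - ξ * t)) / (1 - t ^ d) := by
    intro ξ hξ
    have hξt := one_sub_mul_ne_zero_of_mem_nthRootsFinset hξ ht
    have hgeom : (∑ j ∈ range d, (ξ * t) ^ j) * (1 - ξ * t) = 1 - t ^ d := by
      rw [geom_sum_mul_neg, mul_pow_eq_of_mem_nthRootsFinset hξ]
    have hS : ∑ j ∈ range d, (ξ * t) ^ j ≠ 0 := left_ne_zero_of_mul (hgeom ▸ hu)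
    rw [← sum_div, ← hgeom]
    field_simp
  rw [sum_congr rfl hexpand, ← sum_div, sum_comm,
    sum_congr rfl fun j _ ↦ hζ.sum_nthRootsFinset_mul_pow_div_one_sub hd ht j]
  obtain ⟨n, rfl⟩ : ∃ n, d = n + 1 := ⟨d - 1, by omega⟩
  have hceil : ∀ j ∈ range n, (j + 1) ⌈/⌉ (n + 1) = 1 := fun j hj ↦ by
    rw [mem_range] at hj
    rw [Nat.ceilDiv_eq_add_pred_div, Nat.div_eq_of_lt_le] <;> omega
  rw [sum_range_succ', sum_congr rfl fun j hj ↦ by rw [hceil j hj], sum_const, card_range,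
    zero_ceilDiv]
  generalize t ^ (n + 1) = u at hu ⊢
  rw [nsmul_eq_mul]
  field_simp
  push_cast
  ring

theorem IsPrimitiveRoot.sum_nthRootsFinset_one_sub_mul_sum_pow_div_sq (hζ : IsPrimitiveRoot ζ d)
    (hd : 0 < d) {t : K} (ht : t ^ d ≠ 1) (G : Finset ℕ) :
    ∑ ξ ∈ nthRootsFinset d (1 : K),
        (1 - (1 - ξ * t) * ∑ k ∈ G, (ξ * t) ^ k) / (1 - ξ * t) ^ 2
      = d * (1 + (d - 1) * t ^ d) / (1 - t ^ d) ^ 2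
        - d * (∑ k ∈ G, (t ^ d) ^ (k ⌈/⌉ d)) / (1 - t ^ d) := by
  have hsplit : ∀ ξ ∈ nthRootsFinset d (1 : K),
      (1 - (1 - ξ * t) * ∑ k ∈ G, (ξ * t) ^ k) / (1 - ξ * t) ^ 2
        = 1 / (1 - ξ * t) ^ 2 - ∑ k ∈ G, (ξ * t) ^ k / (1 - ξ * t) := fun ξ hξ ↦ by
    have := one_sub_mul_ne_zero_of_mem_nthRootsFinset hξ ht
    rw [← sum_div]
    field_simp
  rw [sum_congr rfl hsplit, sum_sub_distrib, sum_comm,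
    hζ.sum_nthRootsFinset_one_div_one_sub_mul_sq hd ht,
    sum_congr rfl fun k _ ↦ hζ.sum_nthRootsFinset_mul_pow_div_one_sub hd ht k, ← sum_div,
    ← mul_sum]

end RootsOfUnity

theorem Finset.sum_pow_eq_card_mul_pow_add_one_sub_mul_sum {ι R : Type*} [CommRing R]
    (s : Finset ι) (f : ι → ℕ) {N : ℕ} (hf : ∀ i ∈ s, f i ≤ N) (u : R) :
    ∑ i ∈ s, u ^ f i
      = #s * u ^ N + (1 - u) * ∑ m ∈ range N, #{i ∈ s | f i ≤ m} * u ^ m := by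
  have htelescope : ∀ i ∈ s,
      u ^ f i = u ^ N + (1 - u) * ∑ m ∈ range N, if f i ≤ m then u ^ m else 0 :=
      fun i hi ↦ by
    rw [← sum_filter, show {m ∈ range N | f i ≤ m} = Ico (f i) N by ext; simp [and_comm],
      mul_comm, geom_sum_Ico_mul_neg _ (hf i hi)]
    ring
  rw [sum_congr rfl htelescope, sum_add_distrib, sum_const, nsmul_eq_mul, ← mul_sum, sum_comm]
  simp_rw [← sum_filter, sum_const, nsmul_eq_mul]

theorem one_add_card_mul_sub_one_add_sub_one_sq_mul_sum_geom {R : Type*} [CommRing R]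
    (G : Finset ℕ) (x : R) :
    1 + #G * (x - 1) + (x - 1) ^ 2 * ∑ k ∈ G, ∑ i ∈ range k, x ^ i
      = 1 - (1 - x) * ∑ k ∈ G, x ^ k := by
  rw [sq, mul_assoc, mul_sum]
  simp_rw [mul_comm (x - 1) (∑ i ∈ range _, _), geom_sum_mul, sum_sub_distrib, sum_const,
    nsmul_eq_mul, mul_one]
  ring

theorem one_sub_pow_three_mul_sum_range_mul_pow_sub {R : Type*} [CommRing R] (a : ℕ → R) {e : R}
    (ha : ∀ m, a (m + 2) - 2 * a (m + 1) + a m = e) (v : R) (n : ℕ) :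
    (1 - v) ^ 3 * ∑ l ∈ range n, a l * v ^ (n - 1 - l)
      = a n * (1 - v) ^ 2 + (a n - a (n + 1)) * (1 - v) + e
        - v ^ n * (a 0 * (1 - v) ^ 2 + (a 0 - a 1) * (1 - v) + e) := by
  induction n with
  | zero => simp
  | succ n ih =>
    have hshift : ∑ l ∈ range n, a l * v ^ (n + 1 - 1 - l)
        = v * ∑ l ∈ range n, a l * v ^ (n - 1 - l) := by
      rw [mul_sum]
      refine sum_congr rfl fun l hl ↦ ?_
      rw [show n + 1 - 1 - l = n - 1 - l + 1 by simp at hl; omega, pow_succ]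
      ring
    rw [sum_range_succ, hshift, show n + 1 - 1 - n = 0 by omega, pow_zero, pow_succ]
    linear_combination v * ih + (1 - v) * ha n

theorem one_sub_pow_three_mul_sum_range_choose_two_mul_pow {K : Type*} [Field K] [CharZero K]
    (v : K) (n : ℕ) :
    (1 - v) ^ 3 * ∑ l ∈ range n, ((l : K) + 1) * ((l : K) + 2) / 2 * v ^ (n - 1 - l)
      = ((n : K) + 1) * ((n : K) + 2) / 2 * (1 - v) ^ 2 - ((n : K) + 2) * (1 - v) + 1
        - v ^ (n + 2) := by
  rw [one_sub_pow_three_mul_sum_range_mul_pow_sub _ (e := 1) (fun m ↦ by push_cast; ring)]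
  push_cast
  ring

section Symmetric

variable {Γ : Set ℕ}

theorem card_filter_mem_range_eq_card_filter_notMem_Ico [DecidablePred (· ∈ Γ)] {c : ℕ}
    (hsym : ∀ k < c, k ∈ Γ ↔ c - 1 - k ∉ Γ) {n : ℕ} (hn : n ≤ c) :
    #{k ∈ range n | k ∈ Γ} = #{k ∈ Ico (c - n) c | k ∉ Γ} := by
  refine card_nbij' (c - 1 - ·) (c - 1 - ·) ?_ ?_ ?_ ?_
  · intro k hk
    simp only [coe_filter, mem_range, mem_Ico, Set.mem_ofPred_eq] at hk ⊢
    exact ⟨by omega, (hsym k (by omega)).1 hk.2⟩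
  · intro k hk
    simp only [coe_filter, mem_range, mem_Ico, Set.mem_ofPred_eq] at hk ⊢
    refine ⟨by omega, (hsym _ (by omega)).2 ?_⟩
    rw [show c - 1 - (c - 1 - k) = k by omega]
    exact hk.2
  · intro k hk
    simp only [coe_filter, mem_range, Set.mem_ofPred_eq] at hk
    show c - 1 - (c - 1 - k) = k
    omega
  · intro k hk
    simp only [coe_filter, mem_Ico, Set.mem_ofPred_eq] at hk
    show c - 1 - (c - 1 - k) = k
    omega

variable {δ : ℕ} (hfin : Γᶜ.Finite) (hδ : Γᶜ.ncard = δ)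
  (hsym : ∀ k < 2 * δ, k ∈ Γ ↔ 2 * δ - 1 - k ∉ Γ)
include hfin hδ hsym

theorem lt_two_mul_of_notMem {k : ℕ} (hk : k ∉ Γ) : k < 2 * δ := by
  classical
  have hhalf := card_filter_mem_range_eq_card_filter_notMem_Ico hsym le_rfl
  rw [Nat.sub_self, ← range_eq_Ico] at hhalf
  have htotal := card_filter_add_card_filter_not (s := range (2 * δ)) (· ∈ Γ)
  rw [card_range] at htotal
  have hgaps : {k ∈ range (2 * δ) | k ∉ Γ} = hfin.toFinset := by
    refine eq_of_subset_of_card_le (fun k hk ↦ by simpa using (mem_filter.1 hk).2) ?_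
    rw [← Set.ncard_eq_toFinset_card Γᶜ hfin, hδ]
    omega
  have : k ∈ {k ∈ range (2 * δ) | k ∉ Γ} := by simpa [hgaps] using hk
  simpa using (mem_filter.1 this).1

theorem ncard_mem_le_add_card_gaps_le {n m : ℕ} (hnm : n + m + 2 = 2 * δ) :
    {k | k ∈ Γ ∧ k ≤ n}.ncard + #{k ∈ hfin.toFinset | k ≤ m} = δ := by
  classical
  have hset : {k | k ∈ Γ ∧ k ≤ n} = ↑{k ∈ range (n + 1) | k ∈ Γ} := by
    ext k
    simp [and_comm]
  have hupper :
      {k ∈ Ico (2 * δ - (n + 1)) (2 * δ) | k ∉ Γ} = {k ∈ hfin.toFinset | ¬k ≤ m} := by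
    ext k
    simp only [mem_filter, mem_Ico, Set.Finite.mem_toFinset, Set.mem_compl_iff]
    constructor
    · rintro ⟨⟨hlo, -⟩, hk⟩
      exact ⟨hk, by omega⟩
    · rintro ⟨hk, hlo⟩
      exact ⟨⟨by omega, lt_two_mul_of_notMem hfin hδ hsym hk⟩, hk⟩
  rw [hset, Set.ncard_coe_finset, card_filter_mem_range_eq_card_filter_notMem_Ico hsym (by omega),
    hupper, add_comm, card_filter_add_card_filter_not, ← Set.ncard_eq_toFinset_card Γᶜ hfin,
    hδ]

theorem ceilDiv_le_sub_two_of_notMem {d : ℕ} (hd : 3 ≤ d) (hδ2 : 2 * δ = (d - 1) * (d - 2))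
    {k : ℕ} (hk : k ∉ Γ) : k ⌈/⌉ d ≤ d - 2 := by
  have hlt := lt_two_mul_of_notMem hfin hδ hsym hk
  rw [ceilDiv_le_iff_le_mul (by omega)]
  calc k ≤ 2 * δ := hlt.le
    _ = (d - 1) * (d - 2) := hδ2
    _ ≤ d * (d - 2) := Nat.mul_le_mul_right _ (Nat.sub_le d 1)

theorem sum_range_ncard_mul_pow_add_sum_card_gaps_mul_pow {d : ℕ} (hd : 3 ≤ d)
    (hδ2 : 2 * δ = (d - 1) * (d - 2)) {R : Type*} [CommSemiring R] (u : R) :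
    ∑ l ∈ range (d - 2), ({k | k ∈ Γ ∧ k ≤ l * d}.ncard : R) * u ^ (d - 3 - l)
      + ∑ j ∈ range (d - 2), (#{k ∈ hfin.toFinset | k ⌈/⌉ d ≤ j} : R) * u ^ j
      = δ * ∑ j ∈ range (d - 2), u ^ j := by
  classical
  rw [← sum_range_reflect (fun j ↦ (#{k ∈ hfin.toFinset | k ⌈/⌉ d ≤ j} : R) * u ^ j),
    ← sum_range_reflect (fun j ↦ u ^ j), mul_sum, ← sum_add_distrib]
  refine sum_congr rfl fun l hl ↦ ?_
  rw [mem_range] at hl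
  have hcount := ncard_mem_le_add_card_gaps_le hfin hδ hsym (n := l * d) (m := (d - 3 - l) * d) (by
    obtain ⟨e, rfl⟩ := Nat.exists_eq_add_of_le' hd
    rw [hδ2, ← add_mul, Nat.add_sub_of_le (by omega)]
    simp only [Nat.add_sub_cancel, show e + 3 - 1 = e + 2 by omega, show e + 3 - 2 = e + 1 by omega]
    ring)
  simp_rw [show d - 2 - 1 - l = d - 3 - l by omega, ← add_mul,
    ceilDiv_le_iff_le_mul (by omega : 0 < d), mul_comm d, ← hcount, Nat.cast_add]

theorem sum_range_ncard_sub_choose_two_mul_pow {d : ℕ} (hd : 3 ≤ d)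
    (hδ2 : 2 * δ = (d - 1) * (d - 2)) {K : Type*} [Field K] [CharZero K] {u : K} (hu : u ≠ 1) :
    ∑ l ∈ range (d - 2),
        (({k | k ∈ Γ ∧ k ≤ l * d}.ncard : K) - ((l : K) + 1) * ((l : K) + 2) / 2)
          * u ^ (d - 3 - l)
      = (1 + (d - 1) * u) / (1 - u) ^ 2 - (∑ k ∈ hfin.toFinset, u ^ (k ⌈/⌉ d)) / (1 - u)
        - (1 - u ^ d) / (1 - u) ^ 3 := by
  have hu' : 1 - u ≠ 0 := sub_ne_zero.2 hu.symm
  have hgaps := sum_range_ncard_mul_pow_add_sum_card_gaps_mul_pow hfin hδ hsym hd hδ2 u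
  have hchoose := one_sub_pow_three_mul_sum_range_choose_two_mul_pow u (d - 2)
  rw [show d - 2 - 1 = d - 3 by omega, Nat.sub_add_cancel (by omega)] at hchoose
  have hδK : 2 * (δ : K) = (d - 1) * (d - 2) := by
    rw [← Nat.cast_ofNat, ← Nat.cast_mul, hδ2]
    push_cast [Nat.cast_sub (by omega : 1 ≤ d), Nat.cast_sub (by omega : 2 ≤ d)]
    ring
  simp only [sub_mul, sum_sub_distrib]
  rw [eq_sub_of_add_eq hgaps, eq_div_of_mul_eq (pow_ne_zero 3 hu') ((mul_comm _ _).trans hchoose),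
    eq_div_of_mul_eq hu' (geom_sum_mul_neg u (d - 2)),
    sum_pow_eq_card_mul_pow_add_one_sub_mul_sum _ _
      fun k hk ↦ ceilDiv_le_sub_two_of_notMem hfin hδ hsym hd hδ2 (by simpa using hk),
    ← Set.ncard_eq_toFinset_card Γᶜ hfin, hδ,
    show u ^ d = u ^ (d - 2) * u ^ 2 by rw [← pow_add, Nat.sub_add_cancel (by omega)]]
  push_cast [Nat.cast_sub (by omega : 2 ≤ d)]
  generalize u ^ (d - 2) = w
  field_simp
  linear_combination (1 - u) ^ 2 * hδK

end Symmetric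

theorem torsion_identity_general (d : ℕ) (hd : 3 ≤ d)
    (Γ : Set ℕ)
    (hfin : Γᶜ.Finite) (δ : ℕ) (hδ2 : 2 * δ = (d - 1) * (d - 2))
    (hδ : Γᶜ.ncard = δ)
    (hsym : ∀ k : ℕ, k < 2 * δ → (k ∈ Γ ↔ (2 * δ - 1 - k) ∉ Γ))
    (Q Δ : Polynomial ℤ)
    (hQ : Q = ∑ k ∈ hfin.toFinset, ∑ i ∈ Finset.range k, (X : Polynomial ℤ) ^ i)
    (hΔ : Δ = 1 + (δ : Polynomial ℤ) * (X - 1) + (X - 1) ^ 2 * Q)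
    (c : ℕ → ℕ) (hc : ∀ l : ℕ, c l = {k : ℕ | k ∈ Γ ∧ k ≤ l * d}.ncard) :
    ∀ t : ℂ, t ^ d ≠ 1 →
      (1 / (d : ℂ)) * (∑ ξ ∈ Polynomial.nthRootsFinset d (1 : ℂ),
          (Polynomial.aeval (ξ * t) Δ) / (1 - ξ * t) ^ 2)
        - (1 - t ^ (d ^ 2)) / (1 - t ^ d) ^ 3
      = ∑ l ∈ Finset.range (d - 2),
          ((c l : ℂ) - ((l : ℂ) + 1) * ((l : ℂ) + 2) / 2) * t ^ ((d - 3 - l) * d) := by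
  intro t ht
  have hd0 : 0 < d := by omega
  have hΔeval : ∀ x : ℂ, aeval x Δ = 1 - (1 - x) * ∑ k ∈ hfin.toFinset, x ^ k := by
    intro x
    rw [← one_add_card_mul_sub_one_add_sub_one_sq_mul_sum_geom,
      ← Set.ncard_eq_toFinset_card Γᶜ hfin, hδ, hΔ, hQ]
    simp [map_sum]
  simp only [hΔeval, hc, pow_mul' t _ d]
  rw [(Complex.isPrimitiveRoot_exp d hd0.ne').sum_nthRootsFinset_one_sub_mul_sum_pow_div_sq hd0 ht,
    sum_range_ncard_sub_choose_two_mul_pow hfin hδ hsym hd hδ2 ht,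
    show t ^ d ^ 2 = (t ^ d) ^ d by rw [sq, pow_mul]]
  have hdC : (d : ℂ) ≠ 0 := Nat.cast_ne_zero.2 hd0.ne'
  field_simp

/-- Formula (26) of the paper: for a symmetric numerical semigroup `Γ` with
`δ = (d−1)(d−2)/2` gaps, with `Q` the gap polynomial,
`Δ(t) = 1 + δ(t−1) + (t−1)²Q(t)` and `c_l = #{k ∈ Γ : k ≤ ld}`, one has for
every complex `t` with `t^d ≠ 1`:
`(1/d)·Σ_{ξ^d=1} Δ(ξt)/(1−ξt)² − (1−t^{d²})/(1−t^d)³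
  = Σ_{l=0}^{d−3} (c_l − (l+1)(l+2)/2)·t^{(d−3−l)d}`. -/
theorem torsion_identity (d : ℕ) (hd : 3 ≤ d)
    (Γ : Set ℕ) (h0 : 0 ∈ Γ) (hadd : ∀ a ∈ Γ, ∀ b ∈ Γ, a + b ∈ Γ)
    (hfin : Γᶜ.Finite) (δ : ℕ) (hδ2 : 2 * δ = (d - 1) * (d - 2))
    (hδ : Γᶜ.ncard = δ)
    (hsym : ∀ k : ℕ, k < 2 * δ → (k ∈ Γ ↔ (2 * δ - 1 - k) ∉ Γ))
    (Q Δ : Polynomial ℤ)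
    (hQ : Q = ∑ k ∈ hfin.toFinset, ∑ i ∈ Finset.range k, (X : Polynomial ℤ) ^ i)
    (hΔ : Δ = 1 + (δ : Polynomial ℤ) * (X - 1) + (X - 1) ^ 2 * Q)
    (c : ℕ → ℕ) (hc : ∀ l : ℕ, c l = {k : ℕ | k ∈ Γ ∧ k ≤ l * d}.ncard) :
    ∀ t : ℂ, t ^ d ≠ 1 →
      (1 / (d : ℂ)) * (∑ ξ ∈ Polynomial.nthRootsFinset d (1 : ℂ),
          (Polynomial.aeval (ξ * t) Δ) / (1 - ξ * t) ^ 2)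
        - (1 - t ^ (d ^ 2)) / (1 - t ^ d) ^ 3
      = ∑ l ∈ Finset.range (d - 2),
          ((c l : ℂ) - ((l : ℂ) + 1) * ((l : ℂ) + 2) / 2) * t ^ ((d - 3 - l) * d) :=
  torsion_identity_general d hd Γ hfin δ hδ2 hδ hsym Q Δ hQ hΔ c hc
end
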